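/- arXiv:2411.08475 — 6 statements merged into one kernel-verified Lean document; each statement's English description precedes it below -/
import Mathlib

section
/- If G is an n-vertex graph containing no copy of the friendship graph F_{k+1} (k+1 triangles sharing exactly one common vertex), then e(G) ≤ ⌊n²/4⌋ + k·Δ(G), where Δ(G) is the maximum degree of G. -/
open SimpleGraph

/-- Number of edges of a graph. -/
noncomputable def edgeCount {V : Type*} (G : SimpleGraph V) : ℕ := G.edgeSet.ncard

/-- Degree of a vertex. -/
noncomputable def deg {V : Type*} (G : SimpleGraph V) (v : V) : ℕ := (G.neighborSet v).ncard

/-- Maximum degree. -/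
noncomputable def maxDeg {V : Type*} (G : SimpleGraph V) : ℕ := sSup (Set.range (deg G))

/-- Matching number: maximum size of a matching. -/
noncomputable def matchNum {V : Type*} (G : SimpleGraph V) : ℕ :=
  sSup {n | ∃ M : G.Subgraph, M.IsMatching ∧ M.edgeSet.ncard = n}

/-- `G` contains a copy of `H` (a subgraph isomorphic to `H`). -/
def CopyIn {α β : Type*} (H : SimpleGraph α) (G : SimpleGraph β) : Prop :=
  ∃ f : H →g G, Function.Injective f

/-- The friendship graph `F_k`: `k` triangles sharing exactly one common vertex (vertex 0). -/
def friendship (k : ℕ) : SimpleGraph (Fin (2 * k + 1)) :=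
  SimpleGraph.fromRel (fun a b => a.val = 0 ∨ b.val = 0 ∨ (a.val + 1) / 2 = (b.val + 1) / 2)

/-- The star `K_{1,m}` with center 0 and `m` leaves. -/
def starGraph (m : ℕ) : SimpleGraph (Fin (m + 1)) :=
  SimpleGraph.fromRel (fun a b => a.val = 0 ∨ b.val = 0)

/-- The matching `mK_2` of `m` disjoint edges. -/
def matchGraph (m : ℕ) : SimpleGraph (Fin (2 * m)) :=
  SimpleGraph.fromRel (fun a b => a.val / 2 = b.val / 2)

/-- Turán number: max edges of an `n`-vertex graph with no copy of `H`. -/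
noncomputable def exNum (n : ℕ) {α : Type*} (H : SimpleGraph α) : ℕ :=
  sSup {m | ∃ G : SimpleGraph (Fin n), ¬ CopyIn H G ∧ edgeCount G = m}

/-- `f(ν, Δ)`: max edges of a graph with matching number ≤ ν and max degree ≤ Δ. -/
noncomputable def fMax (ν Δ : ℕ) : ℕ :=
  sSup {m | ∃ (n : ℕ) (G : SimpleGraph (Fin n)),
    matchNum G ≤ ν ∧ (∀ v, deg G v ≤ Δ) ∧ edgeCount G = m}

/-- A surjective edge-coloring of `K_n` using exactly `r` colors `0, …, r-1`. -/
def IsSurjColoring (n r : ℕ) (c : Sym2 (Fin n) → ℕ) : Prop :=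
  (∀ e : Sym2 (Fin n), ¬ e.IsDiag → c e < r) ∧
  ∀ i < r, ∃ e : Sym2 (Fin n), ¬ e.IsDiag ∧ c e = i

/-- The colored `K_n` contains a rainbow copy of `H`. -/
def RainbowCopy {α : Type*} {n : ℕ} (c : Sym2 (Fin n) → ℕ) (H : SimpleGraph α) : Prop :=
  ∃ f : H →g (⊤ : SimpleGraph (Fin n)), Function.Injective f ∧
    Set.InjOn (fun e => c (Sym2.map (⇑f) e)) H.edgeSet

/-- Anti-Ramsey number for the pair `{K_{1,k+1}, (k+1)K_2}`. -/
noncomputable def arPair (n k : ℕ) : ℕ :=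
  sInf {r | ∀ c : Sym2 (Fin n) → ℕ, IsSurjColoring n r c →
    RainbowCopy c (_root_.starGraph (k + 1)) ∨ RainbowCopy c (matchGraph (k + 1))}

/-- Anti-Ramsey number of the friendship graph `F_k`. -/
noncomputable def arFriend (n k : ℕ) : ℕ :=
  sInf {r | ∀ c : Sym2 (Fin n) → ℕ, IsSurjColoring n r c → RainbowCopy c (friendship k)}

/-- Anti-Ramsey number of a general graph `G`. -/
noncomputable def arGraph (n : ℕ) {α : Type*} (G : SimpleGraph α) : ℕ :=
  sInf {r | ∀ c : Sym2 (Fin n) → ℕ, IsSurjColoring n r c → RainbowCopy c G}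

/-- Turán number of the family `{G − e : e ∈ E(G)}`. -/
noncomputable def exFamDel (n : ℕ) {α : Type*} (G : SimpleGraph α) : ℕ :=
  sSup {m | ∃ H : SimpleGraph (Fin n),
    (∀ e ∈ G.edgeSet, ¬ CopyIn (G.deleteEdges {e}) H) ∧ edgeCount H = m}

/-!
Let `v` be a vertex of maximum degree `Δ` and `A` its neighbourhood. Together with `v`, a matching
of `k + 1` edges inside `A` would be a copy of `F_{k+1}`, so the edges inside `A` form a graph
without `(k + 1)K₂`. A graph on `a` vertices without `(t + 1)K₂` has at most `t * a` edges:
delete vertices of degree at most `t` one by one; if none is left and `a ≥ 2t + 2`, a maximum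
matching misses two vertices `u, u'`, and since no augmenting path of length at most three
exists, `deg u + deg u'` is at most twice the size of the matching, which is at most `2t`.
Every other edge has an endpoint outside `A`, so there are at most `(n - Δ) Δ ≤ n² / 4` of
them.
-/

open Finset

lemma Nat.choose_two_le_mul {n t : ℕ} (h : n ≤ 2 * t + 1) : n.choose 2 ≤ t * n := by
  rw [Nat.choose_two_right]
  refine Nat.div_le_of_le_mul ?_
  calc n * (n - 1) ≤ n * (2 * t) := Nat.mul_le_mul_left n (by omega)
    _ = 2 * (t * n) := by ring

lemma Nat.sub_mul_le_sq_div_four (n d : ℕ) : (n - d) * d ≤ n ^ 2 / 4 := by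
  rcases le_total d n with h | h
  · rw [Nat.le_div_iff_mul_le four_pos]
    have := four_mul_le_sq_add (n - d) d
    rw [Nat.sub_add_cancel h] at this
    linarith
  · simp [Nat.sub_eq_zero_of_le h]

section Degrees
variable {V : Type*} (G : SimpleGraph V)

lemma edgeCount_eq_card_edgeFinset [Fintype G.edgeSet] : edgeCount G = #G.edgeFinset :=
  Set.ncard_eq_toFinset_card' _

lemma deg_eq_degree (v : V) [Fintype (G.neighborSet v)] : deg G v = G.degree v :=
  Set.ncard_eq_toFinset_card' _

variable [Finite V]

lemma deg_le_maxDeg (v : V) : deg G v ≤ maxDeg G :=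
  le_csSup (Set.finite_range _).bddAbove ⟨v, rfl⟩

lemma exists_deg_eq_maxDeg [Nonempty V] : ∃ v, deg G v = maxDeg G :=
  (Set.range_nonempty _).csSup_mem (Set.finite_range _)

end Degrees

lemma CopyIn.mono {α β : Type*} {K : SimpleGraph α} {H H' : SimpleGraph β} (h : CopyIn K H)
    (hle : H ≤ H') : CopyIn K H' :=
  let ⟨f, hf⟩ := h
  ⟨(SimpleGraph.Hom.ofLE hle).comp f, hf⟩

lemma matchGraph_exists_adj {m : ℕ} (j : Fin (2 * m)) : ∃ j', (matchGraph m).Adj j j' := by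
  have := j.isLt
  refine ⟨⟨if j.val % 2 = 0 then j.val + 1 else j.val - 1, by split_ifs <;> omega⟩, ?_⟩
  rw [matchGraph, SimpleGraph.fromRel_adj, ne_eq, Fin.ext_iff]
  split_ifs <;> dsimp only <;> omega

lemma copyIn_friendship_of_copyIn_matchGraph {V : Type*} {G H : SimpleGraph V} {v : V} {m : ℕ}
    (hle : H ≤ G) (hH : H.support ⊆ G.neighborSet v) (h : CopyIn (matchGraph m) H) :
    CopyIn (friendship m) G := by
  obtain ⟨f, hf⟩ := h
  have hv : ∀ j, G.Adj v (f j) := fun j =>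
    let ⟨j', hj'⟩ := matchGraph_exists_adj j
    hH ⟨f j', f.map_rel hj'⟩
  refine ⟨⟨Fin.cons v f, fun {x y} hxy => ?_⟩,
    Fin.cons_injective_iff.2 ⟨fun ⟨j, hj⟩ => (hv j).ne hj.symm, hf⟩⟩
  rw [friendship, SimpleGraph.fromRel_adj] at hxy
  induction x using Fin.cases <;> induction y using Fin.cases
  · exact absurd rfl hxy.1
  · simpa using hv _
  · simpa using (hv _).symm
  · rename_i i j
    simp only [Fin.cons_succ]
    refine hle (f.map_rel ?_)
    rw [matchGraph, SimpleGraph.fromRel_adj, ne_eq, Fin.ext_iff]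
    simp only [ne_eq, Fin.val_succ, Fin.ext_iff] at hxy
    omega

lemma card_insert_of_forall_notMem {W : Type*} [DecidableEq W] {M : Finset (Sym2 W)}
    {e : Sym2 W} (hfree : ∀ x ∈ e, ∀ f ∈ M, x ∉ f) : #(insert e M) = #M + 1 := by
  refine card_insert_of_notMem fun heM => ?_
  induction e using Sym2.ind with
  | _ x y => exact hfree x (Sym2.mem_mk_left x y) _ heM (Sym2.mem_mk_left x y)

namespace SimpleGraph

variable {W : Type*}

def IsEdgeMatching (H : SimpleGraph W) (M : Finset (Sym2 W)) : Prop :=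
  (M : Set (Sym2 W)) ⊆ H.edgeSet ∧ (M : Set (Sym2 W)).Pairwise fun e f => ∀ x ∈ e, x ∉ f

section Matching

variable {H : SimpleGraph W} {M : Finset (Sym2 W)}

lemma IsEdgeMatching.subset {M' : Finset (Sym2 W)} (hM : H.IsEdgeMatching M) (h : M' ⊆ M) :
    H.IsEdgeMatching M' :=
  ⟨(coe_subset.2 h).trans hM.1, hM.2.mono (coe_subset.2 h)⟩

lemma IsEdgeMatching.insert_of_forall_notMem [DecidableEq W] (hM : H.IsEdgeMatching M)
    {e : Sym2 W} (he : e ∈ H.edgeSet) (hfree : ∀ x ∈ e, ∀ f ∈ M, x ∉ f) :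
    H.IsEdgeMatching (insert e M) := by
  refine ⟨?_, ?_⟩
  · rw [coe_insert]; exact Set.insert_subset he hM.1
  · rw [coe_insert, Set.pairwise_insert]
    exact ⟨hM.2, fun f hf _ => ⟨fun x hx => hfree x hx f hf,
      fun x hx hxe => hfree x hxe f hf hx⟩⟩

lemma IsEdgeMatching.copyIn_matchGraph (hM : H.IsEdgeMatching M) : CopyIn (matchGraph #M) H := by
  set m := #M
  let e : Fin m → Sym2 W := fun i => M.equivFin.symm i
  have he : ∀ i, e i ∈ M := fun i => (M.equivFin.symm i).2
  have he_inj : Function.Injective e := Subtype.val_injective.comp M.equivFin.symm.injective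
  choose a b hab using fun i => (Sym2.exists (f := (· = e i))).1 ⟨_, rfl⟩
  have hadj : ∀ i, H.Adj (a i) (b i) := fun i => by
    rw [← mem_edgeSet, hab]; exact hM.1 (he i)
  let idx : Fin (2 * m) → Fin m := fun j => ⟨j / 2, by omega⟩
  let f : Fin (2 * m) → W := fun j => if j.val % 2 = 0 then a (idx j) else b (idx j)
  have hmem : ∀ j, f j ∈ e (idx j) := fun j => by
    rw [← hab]; unfold f; split_ifs <;> simp
  have hpair : ∀ j j', idx j = idx j' → j ≠ j' → H.Adj (f j) (f j') := by
    intro j j' hjj' hne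
    have hval : j.val / 2 = j'.val / 2 := congrArg Fin.val hjj'
    have : j.val ≠ j'.val := Fin.val_ne_of_ne hne
    unfold f; rw [hjj']
    split_ifs <;> first | omega | exact hadj _ | exact (hadj _).symm
  refine ⟨⟨f, fun {j j'} hjj' => ?_⟩, fun j j' hff => ?_⟩
  · rw [matchGraph, fromRel_adj] at hjj'
    exact hpair j j' (Fin.ext (hjj'.2.elim id Eq.symm)) hjj'.1
  · change f j = f j' at hff
    by_contra hne
    by_cases hidx : idx j = idx j'
    · exact (hpair j j' hidx hne).ne hff
    · exact hM.2 (he _) (he _) (he_inj.ne hidx) _ (hmem j) (hff ▸ hmem j')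

lemma exists_isEdgeMatching_forall_card_le [Finite W] (H : SimpleGraph W) :
    ∃ M, H.IsEdgeMatching M ∧ ∀ M', H.IsEdgeMatching M' → #M' ≤ #M := by
  classical
  have := Fintype.ofFinite W
  obtain ⟨M, hM, hmax⟩ := exists_max_image
    (H.edgeFinset.powerset.filter H.IsEdgeMatching) card
    ⟨∅, mem_filter.2 ⟨empty_mem_powerset _, by simp [IsEdgeMatching]⟩⟩
  refine ⟨M, (mem_filter.1 hM).2, fun M' hM' => hmax M' (mem_filter.2 ⟨?_, hM'⟩)⟩
  exact mem_powerset.2 fun e he => mem_edgeFinset.2 (hM'.1 he)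

lemma exists_pair_forall_notMem [DecidableEq W] (M : Finset (Sym2 W)) (A : Finset W)
    (hA : 2 * #M + 2 ≤ #A) :
    ∃ u ∈ A, ∃ u' ∈ A, u ≠ u' ∧ (∀ e ∈ M, u ∉ e) ∧ ∀ e ∈ M, u' ∉ e := by
  set C := M.biUnion Sym2.toFinset
  have hC : #C ≤ 2 * #M := calc
    #C ≤ ∑ e ∈ M, #e.toFinset := card_biUnion_le
    _ ≤ ∑ _e ∈ M, 2 := sum_le_sum fun e _ => by rw [Sym2.card_toFinset]; split_ifs <;> simp
    _ = 2 * #M := by rw [sum_const, smul_eq_mul, mul_comm]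
  obtain ⟨u, hu, u', hu', huu'⟩ :=
    one_lt_card.1 (lt_of_lt_of_le (by omega) (le_card_sdiff C A))
  have hfree : ∀ x ∈ A \ C, ∀ e ∈ M, x ∉ e := fun x hx e he hxe =>
    (mem_sdiff.1 hx).2 (mem_biUnion.2 ⟨e, he, Sym2.mem_toFinset.2 hxe⟩)
  exact ⟨u, (mem_sdiff.1 hu).1, u', (mem_sdiff.1 hu').1, huu', hfree u hu, hfree u' hu'⟩

section Maximum

variable [DecidableEq W]

lemma card_neighborFinset_filter_mem_le [Fintype W] [DecidableRel H.Adj] (x a b : W) :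
    #((H.neighborFinset x).filter (· ∈ s(a, b))) ≤
      (if H.Adj x a then 1 else 0) + (if H.Adj x b then 1 else 0) := by
  calc #((H.neighborFinset x).filter (· ∈ s(a, b)))
      ≤ #((if H.Adj x a then {a} else ∅) ∪ (if H.Adj x b then {b} else ∅)) := by
        refine card_le_card fun y hy => ?_
        simp only [mem_filter, mem_neighborFinset, Sym2.mem_iff] at hy
        rcases hy with ⟨hxy, rfl | rfl⟩ <;> simp [hxy]
    _ ≤ _ := (card_union_le _ _).trans (by split_ifs <;> simp)

variable (hM : H.IsEdgeMatching M) (hmax : ∀ M', H.IsEdgeMatching M' → #M' ≤ #M)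
  {u u' : W} (hu : ∀ e ∈ M, u ∉ e)
include hM hmax hu

lemma IsEdgeMatching.exists_mem_of_adj {z : W} (hadj : H.Adj u z) : ∃ e ∈ M, z ∈ e := by
  by_contra! hz
  have hfree : ∀ x ∈ s(u, z), ∀ f ∈ M, x ∉ f := by
    rintro x hx f hf
    rcases Sym2.mem_iff.1 hx with rfl | rfl
    exacts [hu f hf, hz f hf]
  have := hmax _ (hM.insert_of_forall_notMem hadj hfree)
  rw [card_insert_of_forall_notMem hfree] at this
  omega

lemma IsEdgeMatching.not_adj_and_adj (hu' : ∀ e ∈ M, u' ∉ e) (huu' : u ≠ u') {a b : W}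
    (hab : s(a, b) ∈ M) : ¬ (H.Adj u a ∧ H.Adj u' b) := by
  -- otherwise `u a b u'` is an augmenting path
  rintro ⟨hua, hu'b⟩
  have hne : a ≠ b := (hM.1 hab).ne
  have hoff : ∀ x ∈ s(a, b), ∀ f ∈ M.erase s(a, b), x ∉ f := fun x hx f hf =>
    hM.2 hab (mem_of_mem_erase hf) (ne_of_mem_erase hf).symm x hx
  have hfree₁ : ∀ x ∈ s(u, a), ∀ f ∈ M.erase s(a, b), x ∉ f := by
    rintro x hx f hf
    rcases Sym2.mem_iff.1 hx with rfl | rfl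
    exacts [hu f (mem_of_mem_erase hf), hoff x (Sym2.mem_mk_left _ _) f hf]
  have hfree₂ : ∀ x ∈ s(u', b), ∀ f ∈ insert s(u, a) (M.erase s(a, b)), x ∉ f := by
    rintro x hx f hf
    rcases mem_insert.1 hf with rfl | hf
    · rcases Sym2.mem_iff.1 hx with rfl | rfl <;> rw [Sym2.mem_iff] <;> rintro (rfl | rfl)
      exacts [huu' rfl, hu' _ hab (Sym2.mem_mk_left _ _), hu _ hab (Sym2.mem_mk_right _ _),
        hne rfl]
    · rcases Sym2.mem_iff.1 hx with rfl | rfl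
      exacts [hu' f (mem_of_mem_erase hf), hoff x (Sym2.mem_mk_right _ _) f hf]
  have h₁ := (hM.subset (erase_subset _ _)).insert_of_forall_notMem hua hfree₁
  have := hmax _ (h₁.insert_of_forall_notMem hu'b hfree₂)
  rw [card_insert_of_forall_notMem hfree₂, card_insert_of_forall_notMem hfree₁,
    card_erase_of_mem hab] at this
  have : 0 < #M := card_pos.2 ⟨_, hab⟩
  omega

variable [Fintype W] [DecidableRel H.Adj]

lemma IsEdgeMatching.degree_le_sum_card_filter_mem :
    H.degree u ≤ ∑ e ∈ M, #((H.neighborFinset u).filter (· ∈ e)) := by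
  rw [← card_neighborFinset_eq_degree]
  refine (card_le_card fun z hz => ?_).trans card_biUnion_le
  obtain ⟨e, he, hze⟩ := hM.exists_mem_of_adj hmax hu ((mem_neighborFinset _ _ _).1 hz)
  exact mem_biUnion.2 ⟨e, he, mem_filter.2 ⟨hz, hze⟩⟩

lemma IsEdgeMatching.degree_add_degree_le (hu' : ∀ e ∈ M, u' ∉ e) (huu' : u ≠ u') :
    H.degree u + H.degree u' ≤ 2 * #M := by
  have hedge : ∀ e ∈ M, #((H.neighborFinset u).filter (· ∈ e)) +
      #((H.neighborFinset u').filter (· ∈ e)) ≤ 2 := by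
    intro e he
    induction e using Sym2.ind with
    | _ a b =>
      have h₁ := hM.not_adj_and_adj hmax hu hu' huu' he
      have h₂ := hM.not_adj_and_adj hmax hu hu' huu' (Sym2.eq_swap ▸ he)
      have := card_neighborFinset_filter_mem_le (H := H) u a b
      have := card_neighborFinset_filter_mem_le (H := H) u' a b
      split_ifs at * <;> first | omega | tauto
  calc H.degree u + H.degree u'
      ≤ ∑ e ∈ M, (#((H.neighborFinset u).filter (· ∈ e)) +
          #((H.neighborFinset u').filter (· ∈ e))) := by
        rw [sum_add_distrib]
        exact add_le_add (hM.degree_le_sum_card_filter_mem hmax hu)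
          (hM.degree_le_sum_card_filter_mem hmax hu')
    _ ≤ ∑ _e ∈ M, 2 := sum_le_sum hedge
    _ = 2 * #M := by rw [sum_const, smul_eq_mul, mul_comm]

end Maximum

section Bound

variable [Fintype W] [DecidableEq W] [DecidableRel H.Adj] {t : ℕ}

lemma exists_degree_le_of_not_copyIn_matchGraph (hH : ¬ CopyIn (matchGraph (t + 1)) H)
    {A : Finset W} (hA : 2 * t + 2 ≤ #A) : ∃ x ∈ A, H.degree x ≤ t := by
  obtain ⟨M, hM, hmax⟩ := H.exists_isEdgeMatching_forall_card_le
  have hMt : #M ≤ t := by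
    by_contra! h
    obtain ⟨M', hM'M, hM'⟩ := exists_subset_card_eq (show t + 1 ≤ #M from h)
    exact hH (hM' ▸ (hM.subset hM'M).copyIn_matchGraph)
  obtain ⟨u, hu, u', hu', huu', hfree, hfree'⟩ := exists_pair_forall_notMem M A (by omega)
  have := hM.degree_add_degree_le hmax hfree hfree' huu'
  by_cases h : H.degree u ≤ t
  exacts [⟨u, hu, h⟩, ⟨u', hu', by omega⟩]

lemma card_edgeFinset_le_choose_two_of_support_subset {A : Finset W}
    (hA : H.support ⊆ A) : #H.edgeFinset ≤ (#A).choose 2 := by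
  rw [← card_edgeFinset_induce_of_support_subset hA]
  convert card_edgeFinset_le_card_choose_two (G := H.induce (A : Set W)) using 2
  · ext; simp
  · exact (Fintype.card_coe A).symm

end Bound

end Matching

lemma support_spanningCoe_induce_subset (G : SimpleGraph W) (s : Set W) :
    (G.induce s).spanningCoe.support ⊆ s := by
  rw [support_spanningCoe]
  exact Set.image_subset_iff.2 fun x _ => x.2

lemma spanningCoe_induce_adj {G : SimpleGraph W} {s : Set W} {x y : W} (hx : x ∈ s) (hy : y ∈ s)
    (h : G.Adj x y) : (G.induce s).spanningCoe.Adj x y :=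
  map_adj_apply (a := (⟨x, hx⟩ : s)) (b := ⟨y, hy⟩) |>.2 h

lemma not_copyIn_matchGraph_induce_neighborSet {G : SimpleGraph W} {m : ℕ}
    (hG : ¬ CopyIn (friendship m) G) (v : W) :
    ¬ CopyIn (matchGraph m) (G.induce (G.neighborSet v)).spanningCoe := fun h =>
  hG (copyIn_friendship_of_copyIn_matchGraph (spanningCoe_induce_le G _)
    (support_spanningCoe_induce_subset G _) h)

theorem card_edgeFinset_le_mul_of_not_copyIn_matchGraph [Fintype W] [DecidableEq W] {t : ℕ}
    (H : SimpleGraph W) [DecidableRel H.Adj] (hH : ¬ CopyIn (matchGraph (t + 1)) H) (A : Finset W)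
    (hA : H.support ⊆ A) : #H.edgeFinset ≤ t * #A := by
  induction A using Finset.strongInduction generalizing H with
  | H A ih =>
  by_cases hsmall : #A ≤ 2 * t + 1
  · exact (card_edgeFinset_le_choose_two_of_support_subset hA).trans
      (Nat.choose_two_le_mul hsmall)
  obtain ⟨x, hx, hdeg⟩ :=
    exists_degree_le_of_not_copyIn_matchGraph hH (by omega : 2 * t + 2 ≤ #A)
  have hsupp : (H.deleteIncidenceSet x).support ⊆ ↑(A.erase x) := by
    rw [coe_erase]
    exact (support_deleteIncidenceSet_subset H x).trans (Set.sdiff_subset_sdiff_left hA)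
  have hrec := ih _ (erase_ssubset hx) (H.deleteIncidenceSet x)
    (fun h => hH (h.mono (H.deleteIncidenceSet_le x))) hsupp
  rw [card_edgeFinset_deleteIncidenceSet, card_erase_of_mem hx, Nat.mul_sub_one] at hrec
  have : t ≤ t * #A := Nat.le_mul_of_pos_right t (card_pos.2 ⟨x, hx⟩)
  omega

lemma card_edgeFinset_le_add_sum_degree [Fintype W] [DecidableEq W] {G H : SimpleGraph W}
    [DecidableRel G.Adj] [DecidableRel H.Adj] (s : Finset W)
    (hGH : ∀ x ∈ s, ∀ y ∈ s, G.Adj x y → H.Adj x y) :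
    #G.edgeFinset ≤ #H.edgeFinset + ∑ x ∈ sᶜ, G.degree x := by
  have hsub : G.edgeFinset ⊆ H.edgeFinset ∪ sᶜ.biUnion fun x => G.incidenceFinset x := by
    intro e he
    induction e using Sym2.ind with
    | _ x y =>
      rw [mem_edgeFinset, mem_edgeSet] at he
      simp only [mem_union, mem_edgeFinset, mem_edgeSet, mem_biUnion, mem_compl,
        mem_incidenceFinset, mk'_mem_incidenceSet_iff]
      by_cases hx : x ∈ s
      · by_cases hy : y ∈ s
        · exact Or.inl (hGH x hx y hy he)
        · exact Or.inr ⟨y, hy, he, Or.inr rfl⟩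
      · exact Or.inr ⟨x, hx, he, Or.inl rfl⟩
  calc #G.edgeFinset ≤ #H.edgeFinset + #(sᶜ.biUnion fun x => G.incidenceFinset x) :=
        (card_le_card hsub).trans (card_union_le _ _)
    _ ≤ #H.edgeFinset + ∑ x ∈ sᶜ, G.degree x := by
        gcongr
        exact card_biUnion_le.trans_eq (by simp only [card_incidenceFinset_eq_degree])

lemma sum_degree_compl_le [Fintype W] [DecidableEq W] (G : SimpleGraph W) [DecidableRel G.Adj]
    (s : Finset W) : ∑ x ∈ sᶜ, G.degree x ≤ (Fintype.card W - #s) * maxDeg G := calc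
  ∑ x ∈ sᶜ, G.degree x ≤ ∑ _x ∈ sᶜ, maxDeg G :=
    sum_le_sum fun x _ => deg_eq_degree G x ▸ deg_le_maxDeg G x
  _ = (Fintype.card W - #s) * maxDeg G := by rw [sum_const, smul_eq_mul, card_compl]

end SimpleGraph

/-- An `F_{k+1}`-free graph has at most `⌊n²/4⌋ + k·Δ(G)` edges. -/
theorem stmt2 {V : Type*} [Fintype V] (n k : ℕ) (hV : Fintype.card V = n)
    (G : SimpleGraph V) (hfree : ¬ CopyIn (friendship (k + 1)) G) :
    edgeCount G ≤ n ^ 2 / 4 + k * maxDeg G := by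
  classical
  rcases isEmpty_or_nonempty V with hV0 | hV0
  · simp [edgeCount, Set.eq_empty_of_isEmpty]
  obtain ⟨v, hv⟩ := exists_deg_eq_maxDeg G
  set A := G.neighborFinset v
  set H := (G.induce (G.neighborSet v)).spanningCoe
  have hA : #A = maxDeg G := by rw [← hv, deg_eq_degree, card_neighborFinset_eq_degree]
  have hHA : H.support ⊆ A := by
    rw [coe_neighborFinset]; exact support_spanningCoe_induce_subset G _
  calc edgeCount G = #G.edgeFinset := edgeCount_eq_card_edgeFinset G
    _ ≤ #H.edgeFinset + ∑ x ∈ Aᶜ, G.degree x :=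
      card_edgeFinset_le_add_sum_degree A fun x hx y hy =>
        spanningCoe_induce_adj (by simpa [A] using hx) (by simpa [A] using hy)
    _ ≤ k * maxDeg G + (n - maxDeg G) * maxDeg G := by
      gcongr
      · exact hA ▸ card_edgeFinset_le_mul_of_not_copyIn_matchGraph H
          (not_copyIn_matchGraph_induce_neighborSet hfree v) A hHA
      · exact hV ▸ hA ▸ sum_degree_compl_le G A
    _ ≤ n ^ 2 / 4 + k * maxDeg G := by
      have := Nat.sub_mul_le_sq_div_four n (maxDeg G)
      omega
end

section
/- Let r ≥ 4 and let G be a nearly r-regular graph of odd order |G| ≤ 2r−1. Then G has no nontrivial edge-cut of size at most r−1; that is, for every partition of V(G) into two parts each of size at least 2 with both parts inducing connected subgraphs, the number of edges between the parts is at least r. -/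
open SimpleGraph

open Finset

/- One side `S` of the partition has `a` vertices with `2 ≤ a ≤ r - 1`, since the two sides
together have at most `2r - 1`. The degrees in `S` sum to at least `ar - 1`, and at most
`a(a - 1)` of this is spent on edges inside `S`, so at least
`ar - 1 - a(a - 1) = r + (a - 1)(r - a) - 1 ≥ r` edges leave `S`. -/

namespace SimpleGraph

variable {V : Type*} (G : SimpleGraph V) [DecidableRel G.Adj]

lemma card_interedges_self_le (s : Finset V) : #(G.interedges s s) ≤ #s * (#s - 1) := by
  calc #(G.interedges s s) ≤ #s.offDiag :=
        card_le_card fun p hp ↦ by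
          rw [mem_interedges_iff] at hp
          exact mem_offDiag.2 ⟨hp.1, hp.2.1, hp.2.2.ne⟩
    _ = #s * (#s - 1) := by rw [offDiag_card, Nat.mul_sub_one]

lemma card_interedges_comm (s t : Finset V) : #(G.interedges s t) = #(G.interedges t s) :=
  have : Std.Symm G.Adj := G.symm
  Rel.card_interedges_comm s t

lemma ncard_setOf_adj_eq_card_interedges (A B : Set V) [Fintype A] [Fintype B] :
    {p : V × V | p.1 ∈ A ∧ p.2 ∈ B ∧ G.Adj p.1 p.2}.ncard
      = #(G.interedges A.toFinset B.toFinset) := by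
  rw [← Set.ncard_coe_finset]
  congr 1
  ext p
  simp [mem_interedges_iff]

variable [Fintype V]

lemma deg_eq_degree (v : V) : deg G v = G.degree v := by
  simp [deg, degree, neighborFinset, Set.ncard_eq_toFinset_card']

lemma card_interedges_univ (s : Finset V) :
    #(G.interedges s univ) = ∑ v ∈ s, G.degree v := by
  simp only [interedges_def, card_filter, sum_product, degree, neighborFinset_eq_filter]

variable [DecidableEq V]

lemma card_interedges_self_add_card_interedges_compl (s : Finset V) :
    #(G.interedges s s) + #(G.interedges s sᶜ) = ∑ v ∈ s, G.degree v := by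
  rw [← card_interedges_univ, ← card_union_of_disjoint
    (G.interedges_disjoint_right s disjoint_compl_right)]
  congr 1
  ext ⟨u, v⟩
  simp only [mem_union, mk_mem_interedges_iff, mem_compl, mem_univ, true_and]
  tauto

variable {G} {r : ℕ} {w : V}

lemma card_mul_le_sum_degree_add_one (hw : r ≤ G.degree w + 1)
    (hdeg : ∀ v, v ≠ w → r ≤ G.degree v) (s : Finset V) :
    #s * r ≤ ∑ v ∈ s, G.degree v + 1 :=
  calc #s * r = ∑ v ∈ s, r := by rw [sum_const, smul_eq_mul]
    _ ≤ ∑ v ∈ s, (G.degree v + if v = w then 1 else 0) := by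
        gcongr with v
        split_ifs with h
        · exact h ▸ hw
        · simpa using hdeg v h
    _ ≤ ∑ v ∈ s, G.degree v + 1 := by
        rw [sum_add_distrib, sum_ite_eq']
        split_ifs <;> omega

lemma le_card_interedges_compl (hw : r ≤ G.degree w + 1)
    (hdeg : ∀ v, v ≠ w → r ≤ G.degree v) {s : Finset V} (hs : 2 ≤ #s) (hsr : #s < r) :
    r ≤ #(G.interedges s sᶜ) := by
  have hsum := card_mul_le_sum_degree_add_one hw hdeg s
  rw [← G.card_interedges_self_add_card_interedges_compl] at hsum
  have hin := G.card_interedges_self_le s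
  obtain ⟨a, ha⟩ : ∃ a, #s = a + 2 := ⟨#s - 2, by omega⟩
  obtain ⟨k, rfl⟩ : ∃ k, r = a + 3 + k := ⟨r - (a + 3), by omega⟩
  rw [ha] at hsum hin
  simp only [show a + 2 - 1 = a + 1 from rfl] at hin
  nlinarith

end SimpleGraph

theorem stmt5_general {V : Type*} [Fintype V] (r : ℕ) (G : SimpleGraph V)
    (hcard : Fintype.card V ≤ 2 * r - 1)
    (w : V) (hw : deg G w = r - 1) (hreg : ∀ u, u ≠ w → deg G u = r)
    (A B : Set V) (hUnion : A ∪ B = Set.univ) (hDisj : Disjoint A B)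
    (hA : 2 ≤ A.ncard) (hB : 2 ≤ B.ncard) :
    r ≤ {p : V × V | p.1 ∈ A ∧ p.2 ∈ B ∧ G.Adj p.1 p.2}.ncard := by
  classical
  obtain rfl : B = Aᶜ := (IsCompl.compl_eq ⟨hDisj, codisjoint_iff.mpr hUnion⟩).symm
  have hdeg : ∀ v, v ≠ w → r ≤ G.degree v := fun v hv ↦ (G.deg_eq_degree v ▸ hreg v hv).ge
  have hw' : r ≤ G.degree w + 1 := by have := G.deg_eq_degree w; omega
  rw [ncard_setOf_adj_eq_card_interedges, Set.toFinset_compl]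
  rw [Set.ncard_eq_toFinset_card'] at hA hB
  rw [Set.toFinset_compl] at hB
  have hsum := card_add_card_compl A.toFinset
  rcases lt_or_ge #A.toFinset r with hAr | hAr
  · exact le_card_interedges_compl hw' hdeg hA hAr
  · calc r ≤ #(G.interedges A.toFinsetᶜ A.toFinset) := by
          simpa using le_card_interedges_compl hw' hdeg hB (by omega)
      _ = #(G.interedges A.toFinset A.toFinsetᶜ) := G.card_interedges_comm _ _

/-- A nearly `r`-regular graph of odd order at most `2r-1` (`r ≥ 4`) has no nontrivial
edge-cut of size at most `r-1`. -/
theorem stmt5 {V : Type*} [Fintype V] (r : ℕ) (hr : 4 ≤ r) (G : SimpleGraph V)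
    (hodd : Odd (Fintype.card V)) (hcard : Fintype.card V ≤ 2 * r - 1)
    (w : V) (hw : deg G w = r - 1) (hreg : ∀ u, u ≠ w → deg G u = r)
    (A B : Set V) (hUnion : A ∪ B = Set.univ) (hDisj : Disjoint A B)
    (hA : 2 ≤ A.ncard) (hB : 2 ≤ B.ncard)
    (hAconn : (G.induce A).Connected) (hBconn : (G.induce B).Connected) :
    r ≤ {p : V × V | p.1 ∈ A ∧ p.2 ∈ B ∧ G.Adj p.1 p.2}.ncard :=
  stmt5_general r G hcard w hw hreg A B hUnion hDisj hA hB
end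

section
/- For n ≥ 4, every surjective edge-coloring of the complete graph K_n with 3 colors can avoid both a rainbow K_{1,3} and a rainbow matching of size 3; explicitly, the coloring giving edge x₁x₂ color 1, edges x₁x_j (3 ≤ j ≤ n) color 2, and all remaining edges color 3 contains no rainbow K_{1,3} and no rainbow 3K_2. -/
open SimpleGraph

/-
Every edge avoiding `x₀` has color 3, so a rainbow subgraph contains at most one edge avoiding
`x₀`, and the edges through `x₀` carry only the two colors 1 and 2. A rainbow `K_{1,3}` centred at
`x₀` would need three colors among `{1, 2}`. A rainbow `K_{1,3}` centred elsewhere, or a rainbow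
`3K_2`, has three edges of which at most one passes through `x₀`, since an embedding hits `x₀`
at most once; the other two both get color 3.
-/

lemma Fin.exists_pair_of_forall_ne_or {P : Fin 3 → Prop}
    (h : ∀ i j, i ≠ j → P i ∨ P j) : ∃ i j, i ≠ j ∧ P i ∧ P j := by
  rcases h 0 1 (by decide) with h0 | h1
  · rcases h 1 2 (by decide) with h1 | h2
    exacts [⟨0, 1, by decide, h0, h1⟩, ⟨0, 2, by decide, h0, h2⟩]
  · rcases h 0 2 (by decide) with h0 | h2
    exacts [⟨0, 1, by decide, h0, h1⟩, ⟨1, 2, by decide, h1, h2⟩]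

def starEdge {m : ℕ} (i : Fin m) : Sym2 (Fin (m + 1)) := s(0, i.succ)

lemma starEdge_mem_edgeSet {m : ℕ} (i : Fin m) : starEdge i ∈ (_root_.starGraph m).edgeSet := by
  rw [starEdge, mem_edgeSet, _root_.starGraph, fromRel_adj]
  exact ⟨(Fin.succ_ne_zero i).symm, Or.inl (Or.inl rfl)⟩

lemma eq_of_mem_starEdge {m : ℕ} {a : Fin (m + 1)} {i j : Fin m} (ha : a ≠ 0)
    (hi : a ∈ starEdge i) (hj : a ∈ starEdge j) : i = j := by
  simp only [starEdge, Sym2.mem_iff, ha, false_or] at hi hj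
  exact Fin.succ_inj.1 (hi.symm.trans hj)

lemma starEdge_injective {m : ℕ} : Function.Injective (starEdge (m := m)) := fun i _ h =>
  eq_of_mem_starEdge (Fin.succ_ne_zero i) (Sym2.mem_mk_right _ _) (h ▸ Sym2.mem_mk_right _ _)

def matchEdge {m : ℕ} (i : Fin m) : Sym2 (Fin (2 * m)) :=
  s(⟨2 * i, by omega⟩, ⟨2 * i + 1, by omega⟩)

lemma matchEdge_mem_edgeSet {m : ℕ} (i : Fin m) : matchEdge i ∈ (matchGraph m).edgeSet := by
  rw [matchEdge, mem_edgeSet, matchGraph, fromRel_adj]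
  exact ⟨by simp, Or.inl (by simp only; omega)⟩

lemma eq_of_mem_matchEdge {m : ℕ} {a : Fin (2 * m)} {i j : Fin m}
    (hi : a ∈ matchEdge i) (hj : a ∈ matchEdge j) : i = j := by
  simp only [matchEdge, Sym2.mem_iff, Fin.ext_iff] at hi hj
  ext; omega

lemma matchEdge_injective {m : ℕ} : Function.Injective (matchEdge (m := m)) := fun _ _ h =>
  eq_of_mem_matchEdge (Sym2.mem_mk_left _ _) (h ▸ Sym2.mem_mk_left _ _)

section MonochromaticOffVertex

variable {α : Type*} {H : SimpleGraph α} {n k : ℕ} {c : Sym2 (Fin n) → ℕ} {x : Fin n}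
  (hk : ∀ i j : Fin n, i ≠ x → j ≠ x → i ≠ j → c s(i, j) = k) (f : H →g (⊤ : SimpleGraph (Fin n)))
include hk

lemma color_map_eq_of_forall_ne {e : Sym2 α} (he : e ∈ H.edgeSet) (hx : ∀ a ∈ e, f a ≠ x) :
    c (e.map f) = k := by
  induction e using Sym2.ind with
  | h a b =>
    rw [Sym2.map_mk]
    exact hk _ _ (hx a (Sym2.mem_mk_left a b)) (hx b (Sym2.mem_mk_right a b)) (f.map_adj he).ne

lemma eq_of_forall_ne_of_injOn (hc : Set.InjOn (fun e => c (e.map f)) H.edgeSet)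
    {e e' : Sym2 α} (he : e ∈ H.edgeSet) (he' : e' ∈ H.edgeSet)
    (hx : ∀ a ∈ e, f a ≠ x) (hx' : ∀ a ∈ e', f a ≠ x) : e = e' :=
  hc he he' ((color_map_eq_of_forall_ne hk f he hx).trans
    (color_map_eq_of_forall_ne hk f he' hx').symm)

theorem not_injOn_of_three_edges (hf : Function.Injective f) (E : Fin 3 → Sym2 α)
    (hE : Function.Injective E) (hEH : ∀ i, E i ∈ H.edgeSet)
    (hdisj : ∀ a, f a = x → ∀ i j, a ∈ E i → a ∈ E j → i = j) :
    ¬ Set.InjOn (fun e => c (e.map f)) H.edgeSet := by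
  intro hc
  suffices ∃ i j, i ≠ j ∧ (∀ a ∈ E i, f a ≠ x) ∧ (∀ a ∈ E j, f a ≠ x) by
    obtain ⟨i, j, hij, hi, hj⟩ := this
    exact hij (hE (eq_of_forall_ne_of_injOn hk f hc (hEH i) (hEH j) hi hj))
  by_cases hx : ∃ a, f a = x
  · obtain ⟨a, ha⟩ := hx
    obtain ⟨i, j, hij, hi, hj⟩ := Fin.exists_pair_of_forall_ne_or (P := fun i => a ∉ E i)
      fun i j hij => not_and_or.1 fun h => hij (hdisj a ha i j h.1 h.2)
    have avoid : ∀ i, a ∉ E i → ∀ b ∈ E i, f b ≠ x := fun i hi b hb hb' =>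
      hi (hf (hb'.trans ha.symm) ▸ hb)
    exact ⟨i, j, hij, avoid i hi, avoid j hj⟩
  · push Not at hx
    exact ⟨0, 1, by decide, fun a _ => hx a, fun a _ => hx a⟩

end MonochromaticOffVertex

section ExplicitColoring

variable {n : ℕ} {c : Sym2 (Fin n) → ℕ}

lemma color_eq_three_of_ne_zero
    (h3 : ∀ i j : Fin n, i.val ≠ 0 → j.val ≠ 0 → i ≠ j → c s(i, j) = 3) (hn : 0 < n) :
    ∀ i j : Fin n, i ≠ ⟨0, hn⟩ → j ≠ ⟨0, hn⟩ → i ≠ j → c s(i, j) = 3 :=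
  fun i j hi hj => h3 i j (fun h => hi (Fin.ext h)) (fun h => hj (Fin.ext h))

lemma color_eq_one_or_two_of_val_eq_zero
    (h1 : ∀ i j : Fin n, i.val = 0 → j.val = 1 → c s(i, j) = 1)
    (h2 : ∀ i j : Fin n, i.val = 0 → 2 ≤ j.val → c s(i, j) = 2)
    {i j : Fin n} (hi : i.val = 0) (hij : i ≠ j) : c s(i, j) = 1 ∨ c s(i, j) = 2 := by
  have hj : j.val ≠ 0 := fun hj => hij (Fin.ext (hi.trans hj.symm))
  rcases Nat.lt_or_ge j.val 2 with hj' | hj'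
  · exact Or.inl (h1 i j hi (by omega))
  · exact Or.inr (h2 i j hi hj')

theorem not_rainbowCopy_starGraph_three
    (h1 : ∀ i j : Fin n, i.val = 0 → j.val = 1 → c s(i, j) = 1)
    (h2 : ∀ i j : Fin n, i.val = 0 → 2 ≤ j.val → c s(i, j) = 2)
    (h3 : ∀ i j : Fin n, i.val ≠ 0 → j.val ≠ 0 → i ≠ j → c s(i, j) = 3) :
    ¬ RainbowCopy c (_root_.starGraph 3) := by
  rintro ⟨f, hf, hc⟩
  by_cases h0 : (f 0).val = 0
  · have hcolor : ∀ i ∈ Finset.univ, c ((starEdge i).map f) ∈ ({1, 2} : Finset ℕ) := by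
      intro i _
      simpa [starEdge, Sym2.map_mk] using
        color_eq_one_or_two_of_val_eq_zero h1 h2 h0 (hf.ne (Fin.succ_ne_zero i).symm)
    obtain ⟨i, -, j, -, hij, hcij⟩ :=
      Finset.exists_ne_map_eq_of_card_lt_of_maps_to (by decide) hcolor
    exact hij (starEdge_injective (hc (starEdge_mem_edgeSet i) (starEdge_mem_edgeSet j) hcij))
  · refine not_injOn_of_three_edges (color_eq_three_of_ne_zero h3 (f 0).pos) f hf starEdge
      starEdge_injective starEdge_mem_edgeSet (fun a ha _ _ => eq_of_mem_starEdge ?_) hc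
    rintro rfl
    exact h0 (congrArg Fin.val ha)

theorem not_rainbowCopy_matchGraph_three
    (h3 : ∀ i j : Fin n, i.val ≠ 0 → j.val ≠ 0 → i ≠ j → c s(i, j) = 3) :
    ¬ RainbowCopy c (matchGraph 3) := by
  rintro ⟨f, hf, hc⟩
  exact not_injOn_of_three_edges (color_eq_three_of_ne_zero h3 (f 0).pos) f hf matchEdge
    matchEdge_injective matchEdge_mem_edgeSet (fun _ _ _ _ => eq_of_mem_matchEdge) hc

end ExplicitColoring

theorem stmt6_general (n : ℕ) (c : Sym2 (Fin n) → ℕ)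
    (h1 : ∀ i j : Fin n, i.val = 0 → j.val = 1 → c s(i, j) = 1)
    (h2 : ∀ i j : Fin n, i.val = 0 → 2 ≤ j.val → c s(i, j) = 2)
    (h3 : ∀ i j : Fin n, i.val ≠ 0 → j.val ≠ 0 → i ≠ j → c s(i, j) = 3) :
    ¬ RainbowCopy c (_root_.starGraph 3) ∧ ¬ RainbowCopy c (matchGraph 3) :=
  ⟨not_rainbowCopy_starGraph_three h1 h2 h3, not_rainbowCopy_matchGraph_three h3⟩

/-- The explicit 3-coloring of `K_n` (edge `x₀x₁` gets color 1, edges `x₀x_j`, `j ≥ 2`,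
get color 2, all other edges get color 3) has no rainbow `K_{1,3}` and no rainbow `3K_2`. -/
theorem stmt6 (n : ℕ) (hn : 4 ≤ n) (c : Sym2 (Fin n) → ℕ)
    (h1 : ∀ i j : Fin n, i.val = 0 → j.val = 1 → c s(i, j) = 1)
    (h2 : ∀ i j : Fin n, i.val = 0 → 2 ≤ j.val → c s(i, j) = 2)
    (h3 : ∀ i j : Fin n, i.val ≠ 0 → j.val ≠ 0 → i ≠ j → c s(i, j) = 3) :
    ¬ RainbowCopy c (_root_.starGraph 3) ∧ ¬ RainbowCopy c (matchGraph 3) :=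
  stmt6_general n c h1 h2 h3
end

section
/- Let k ≥ 4 be even, and let G = K_{k−1} ∪ C where C is a nearly (k−1)-regular factor-critical graph on k+1 vertices. Then ν(G) = k−1, Δ(G) = k−1, and e(G) = f(k−1, k−1), i.e., G is an extremal graph for the degree–matching edge-maximization problem. -/
open SimpleGraph

set_option linter.unusedSectionVars false
section FnM
variable {V : Type*} [Fintype V] {H : SimpleGraph V}

/-- function representation of a matching -/
def FnM (H : SimpleGraph V) (m : V → Option V) : Prop :=
  ∀ ⦃u v⦄, m u = some v → H.Adj u v ∧ m v = some u

def msupp (m : V → Option V) : Set V := {x | m x ≠ none}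

lemma FnM.adj {m} (hm : FnM H m) {u v} (h : m u = some v) : H.Adj u v := (hm h).1
lemma FnM.symm {m} (hm : FnM H m) {u v} (h : m u = some v) : m v = some u := (hm h).2
lemma FnM.ne {m} (hm : FnM H m) {u v} (h : m u = some v) : u ≠ v := (hm h).1.ne

lemma mem_msupp {m : V → Option V} {x : V} : x ∈ msupp m ↔ ∃ y, m x = some y := by
  simp [msupp, Option.ne_none_iff_exists']

/-- subgraph from a function matching -/
def FnM.toSubgraph {m} (hm : FnM H m) : H.Subgraph where
  verts := msupp m
  Adj a b := m a = some b
  adj_sub h := hm.adj h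
  edge_vert h := by simp [msupp, h]
  symm := ⟨fun a b h => hm.symm h⟩

lemma FnM.toSubgraph_isMatching {m} (hm : FnM H m) : hm.toSubgraph.IsMatching := by
  intro v hv
  obtain ⟨y, hy⟩ := mem_msupp.1 hv
  exact ⟨y, hy, fun z hz => by simp_all [FnM.toSubgraph]⟩

/-- the vertex set of a subgraph matching has twice the cardinality of its edge set -/
lemma matching_verts_ncard {M : H.Subgraph} (hM : M.IsMatching) :
    M.verts.ncard = 2 * M.edgeSet.ncard := by
  classical
  have hfin : ∀ (s : Set (Sym2 V)), s.ncard = s.toFinset.card := fun s => Set.ncard_eq_toFinset_card' s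
  rw [Set.ncard_eq_toFinset_card' M.verts, Set.ncard_eq_toFinset_card' M.edgeSet]
  -- map each vertex to its edge
  set f : V → Sym2 V := fun v => s(v, if h : v ∈ M.verts then (hM h).choose else v) with hf
  have hmem : ∀ x ∈ M.verts.toFinset, f x ∈ M.edgeSet.toFinset := by
    intro x hx
    rw [Set.mem_toFinset] at hx ⊢
    simp only [hf, dif_pos hx]
    exact (hM hx).choose_spec.1
  rw [Finset.card_eq_sum_card_fiberwise hmem]
  have : ∀ e ∈ M.edgeSet.toFinset, (M.verts.toFinset.filter (fun a => f a = e)).card = 2 := by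
    intro e he
    rw [Set.mem_toFinset] at he
    induction e with
    | h x y =>
      rw [SimpleGraph.Subgraph.mem_edgeSet] at he
      have hxy : x ≠ y := he.ne
      have hxv : x ∈ M.verts := M.edge_vert he
      have hyv : y ∈ M.verts := M.edge_vert he.symm
      have key : ∀ a, a ∈ M.verts.toFinset ∧ f a = s(x,y) ↔ a = x ∨ a = y := by
        intro a
        constructor
        · rintro ⟨ha, hfa⟩
          rw [Set.mem_toFinset] at ha
          simp only [hf, dif_pos ha, Sym2.eq_iff] at hfa
          rcases hfa with ⟨h1, _⟩ | ⟨h1, _⟩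
          · exact Or.inl h1
          · exact Or.inr h1
        · rintro (rfl | rfl)
          · refine ⟨Set.mem_toFinset.2 hxv, ?_⟩
            simp only [hf, dif_pos hxv]
            have := (hM hxv).choose_spec.2 y he
            rw [this]
          · refine ⟨Set.mem_toFinset.2 hyv, ?_⟩
            simp only [hf, dif_pos hyv]
            have := (hM hyv).choose_spec.2 x he.symm
            rw [this, Sym2.eq_swap]
      have : M.verts.toFinset.filter (fun a => f a = s(x,y)) = {x, y} := by
        ext a
        simp only [Finset.mem_filter, Finset.mem_insert, Finset.mem_singleton]
        exact key a
      rw [this, Finset.card_insert_of_notMem (by simpa using hxy), Finset.card_singleton]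
  rw [Finset.sum_congr rfl this, Finset.sum_const, smul_eq_mul, mul_comm]

lemma matchNum_bddAbove : BddAbove {n | ∃ M : H.Subgraph, M.IsMatching ∧ M.edgeSet.ncard = n} := by
  refine ⟨edgeCount H, fun n hn => ?_⟩
  obtain ⟨M, _, rfl⟩ := hn
  exact Set.ncard_le_ncard M.edgeSet_subset (Set.toFinite _)

lemma matchNum_nonempty : Set.Nonempty {n | ∃ M : H.Subgraph, M.IsMatching ∧ M.edgeSet.ncard = n} := by
  refine ⟨0, ⊥, fun v hv => by simp [SimpleGraph.Subgraph.verts_bot] at hv, ?_⟩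
  simp [SimpleGraph.Subgraph.edgeSet_bot]

/-- any function matching gives a lower bound -/
lemma FnM.le_matchNum {m} (hm : FnM H m) : (msupp m).ncard ≤ 2 * matchNum H := by
  have h1 : hm.toSubgraph.edgeSet.ncard ∈ {n | ∃ M : H.Subgraph, M.IsMatching ∧ M.edgeSet.ncard = n} :=
    ⟨hm.toSubgraph, hm.toSubgraph_isMatching, rfl⟩
  have h2 := le_csSup matchNum_bddAbove h1
  have h3 : (msupp m).ncard = 2 * hm.toSubgraph.edgeSet.ncard := matching_verts_ncard hm.toSubgraph_isMatching
  rw [h3]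
  exact Nat.mul_le_mul_left 2 h2

/-- a maximum matching exists, in function form -/
lemma exists_max_fnM (H : SimpleGraph V) : ∃ m, FnM H m ∧ (msupp m).ncard = 2 * matchNum H := by
  classical
  have := Nat.sSup_mem (matchNum_nonempty (H := H)) matchNum_bddAbove
  obtain ⟨M, hM, hcard⟩ := this
  refine ⟨fun v => if h : v ∈ M.verts then some (hM h).choose else none, ?_, ?_⟩
  · intro u v huv
    by_cases h : u ∈ M.verts
    · simp only [dif_pos h] at huv
      have hadj : M.Adj u v := by
        have := (hM h).choose_spec.1; rwa [Option.some_inj.1 huv] at this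
      have hv : v ∈ M.verts := M.edge_vert hadj.symm
      refine ⟨M.adj_sub hadj, ?_⟩
      simp only [dif_pos hv, Option.some_inj]
      exact ((hM hv).choose_spec.2 u hadj.symm).symm
    · simp only [dif_neg h] at huv
      exact (nomatch huv)
  · have : msupp (fun v => if h : v ∈ M.verts then some (hM h).choose else none) = M.verts := by
      ext v; by_cases h : v ∈ M.verts <;> simp [msupp, h]
    rw [this, matching_verts_ncard hM, hcard]
    rfl

end FnM

section Surgery
variable {V : Type*} [Fintype V]

/-- delete all edges at a vertex -/
def delInc (H : SimpleGraph V) (v : V) : SimpleGraph V where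
  Adj a b := H.Adj a b ∧ a ≠ v ∧ b ≠ v
  symm := ⟨fun a b h => ⟨h.1.symm, h.2.2, h.2.1⟩⟩
  loopless := ⟨fun a h => H.loopless.irrefl a h.1⟩

/-- restrict a graph to a vertex set -/
def restr (H : SimpleGraph V) (A : Set V) : SimpleGraph V where
  Adj a b := H.Adj a b ∧ a ∈ A ∧ b ∈ A
  symm := ⟨fun a b h => ⟨h.1.symm, h.2.2, h.2.1⟩⟩
  loopless := ⟨fun a h => H.loopless.irrefl a h.1⟩

lemma delInc_le {H : SimpleGraph V} {v : V} : delInc H v ≤ H := fun _ _ h => h.1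
lemma restr_le {H : SimpleGraph V} {A : Set V} : restr H A ≤ H := fun _ _ h => h.1

lemma matchNum_mono {H H' : SimpleGraph V} (h : H ≤ H') : matchNum H ≤ matchNum H' := by
  obtain ⟨m, hm, hcard⟩ := exists_max_fnM H
  have hm' : FnM H' m := fun u v huv => ⟨h (hm.adj huv), hm.symm huv⟩
  have := hm'.le_matchNum
  omega

/-- deleting the edges at one vertex decreases the matching number by at most 1 -/
lemma matchNum_delInc_ge {H : SimpleGraph V} (v : V) :
    matchNum H ≤ matchNum (delInc H v) + 1 := by
  classical
  obtain ⟨m, hm, hcard⟩ := exists_max_fnM H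
  set m' : V → Option V := fun x => if x = v ∨ m x = some v then none else m x with hm'def
  have hm' : FnM (delInc H v) m' := by
    intro a b hab
    simp only [hm'def] at hab
    split_ifs at hab with h
    push_neg at h
    have hba := hm.symm hab
    have hbv : b ≠ v := fun hbv => h.2 (hbv ▸ hab)
    refine ⟨⟨hm.adj hab, h.1, hbv⟩, ?_⟩
    simp only [hm'def]
    rw [if_neg]
    · exact hba
    · push_neg
      exact ⟨hbv, fun hc => h.1 (Option.some_inj.1 (hba ▸ hc ▸ rfl))⟩
  have hsub : msupp m \ {v, (m v).getD v} ⊆ msupp m' := by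
    intro x hx
    obtain ⟨hx1, hx2⟩ := hx
    simp only [Set.mem_insert_iff, Set.mem_singleton_iff] at hx2
    push_neg at hx2
    simp only [msupp, Set.mem_setOf_eq, hm'def]
    rw [if_neg]
    · exact hx1
    · push_neg
      refine ⟨hx2.1, fun hc => hx2.2 ?_⟩
      have := hm.symm hc
      rw [this]; rfl
  have h1 : (msupp m \ {v, (m v).getD v}).ncard ≤ (msupp m').ncard :=
    Set.ncard_le_ncard hsub (Set.toFinite _)
  have h2 : (msupp m).ncard ≤ (msupp m \ {v, (m v).getD v}).ncard + 2 := by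
    have hle : ({v, (m v).getD v} : Set V).ncard ≤ 2 := by
      apply le_trans (Set.ncard_insert_le _ _)
      simp
    have := Set.ncard_le_ncard_diff_add_ncard (msupp m) {v, (m v).getD v} (Set.toFinite _)
    omega
  have h3 := hm'.le_matchNum
  omega

lemma fnM_of_le {H H' : SimpleGraph V} (h : H ≤ H') {m} (hm : FnM H m) : FnM H' m :=
  fun u v huv => ⟨h (hm.adj huv), hm.symm huv⟩

end Surgery

section Counting
variable {V : Type*} [Fintype V]

lemma deg_eq_degree_s13 (H : SimpleGraph V) [DecidableRel H.Adj] (v : V) :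
    deg H v = H.degree v := by
  classical
  rw [deg, ← SimpleGraph.card_neighborFinset_eq_degree, SimpleGraph.neighborFinset,
    Set.ncard_eq_toFinset_card']

lemma handshake (H : SimpleGraph V) : ∑ v, deg H v = 2 * edgeCount H := by
  classical
  have : ∀ v, deg H v = H.degree v := deg_eq_degree_s13 H
  rw [Finset.sum_congr rfl (fun v _ => this v), SimpleGraph.sum_degrees_eq_twice_card_edges,
    edgeCount, SimpleGraph.edgeFinset, Set.ncard_eq_toFinset_card']

lemma edgeSet_delInc (H : SimpleGraph V) (v : V) :
    (delInc H v).edgeSet = H.edgeSet \ H.incidenceSet v := by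
  ext e
  induction e with
  | h a b =>
    simp only [SimpleGraph.mem_edgeSet, Set.mem_diff, SimpleGraph.incidenceSet,
      Set.mem_setOf_eq, SimpleGraph.mem_edgeSet]
    constructor
    · rintro ⟨h, ha, hb⟩
      refine ⟨h, ?_⟩
      rintro ⟨-, hv⟩
      rw [Sym2.mem_iff] at hv
      rcases hv with rfl | rfl
      · exact ha rfl
      · exact hb rfl
    · rintro ⟨h, hn⟩
      refine ⟨h, ?_, ?_⟩
      · rintro rfl; exact hn ⟨h, by simp⟩
      · rintro rfl; exact hn ⟨h, by simp⟩

lemma edgeCount_delInc (H : SimpleGraph V) (v : V) :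
    edgeCount (delInc H v) + deg H v = edgeCount H := by
  classical
  have hsub : H.incidenceSet v ⊆ H.edgeSet := fun e he => he.1
  have hd : (H.incidenceSet v).ncard = deg H v := by
    rw [deg_eq_degree_s13, ← SimpleGraph.card_incidenceSet_eq_degree,
      Set.ncard_eq_toFinset_card', Set.toFinset_card]
  rw [edgeCount, edgeSet_delInc, Set.ncard_diff hsub (Set.toFinite _), hd]
  have := Set.ncard_le_ncard hsub (Set.toFinite _)
  rw [hd] at this
  rw [edgeCount]
  omega

lemma deg_delInc_le (H : SimpleGraph V) (v u : V) : deg (delInc H v) u ≤ deg H u :=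
  Set.ncard_le_ncard (fun x hx => hx.1) (Set.toFinite _)

lemma deg_restr_le (H : SimpleGraph V) (A : Set V) (u : V) : deg (restr H A) u ≤ deg H u :=
  Set.ncard_le_ncard (fun x hx => hx.1) (Set.toFinite _)

lemma edgeCount_restr_split (H : SimpleGraph V) (A : Set V)
    (hA : ∀ a b, H.Adj a b → (a ∈ A ↔ b ∈ A)) :
    edgeCount H = edgeCount (restr H A) + edgeCount (restr H Aᶜ) := by
  classical
  have hunion : H.edgeSet = (restr H A).edgeSet ∪ (restr H Aᶜ).edgeSet := by
    ext e
    induction e with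
    | h a b =>
      simp only [SimpleGraph.mem_edgeSet, Set.mem_union]
      constructor
      · intro h
        by_cases ha : a ∈ A
        · exact Or.inl ⟨h, ha, (hA a b h).1 ha⟩
        · exact Or.inr ⟨h, ha, fun hb => ha ((hA a b h).2 hb)⟩
      · rintro (⟨h, -, -⟩ | ⟨h, -, -⟩) <;> exact h
  have hdisj : Disjoint (restr H A).edgeSet (restr H Aᶜ).edgeSet := by
    rw [Set.disjoint_left]
    intro e he1 he2
    induction e with
    | h a b => exact he2.2.1 he1.2.1
  rw [edgeCount, hunion, Set.ncard_union_eq hdisj (Set.toFinite _) (Set.toFinite _)]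
  rfl

lemma matchNum_restr_split (H : SimpleGraph V) (A : Set V)
    (hA : ∀ a b, H.Adj a b → (a ∈ A ↔ b ∈ A)) :
    matchNum H = matchNum (restr H A) + matchNum (restr H Aᶜ) := by
  classical
  apply le_antisymm
  · obtain ⟨m, hm, hcard⟩ := exists_max_fnM H
    set m1 : V → Option V := fun x => if x ∈ A then m x else none with hm1
    set m2 : V → Option V := fun x => if x ∈ Aᶜ then m x else none with hm2
    have hfn1 : FnM (restr H A) m1 := by
      intro a b hab
      simp only [hm1] at hab
      split_ifs at hab with h
      have hadj := hm.adj hab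
      have hb : b ∈ A := (hA a b hadj).1 h
      refine ⟨⟨hadj, h, hb⟩, ?_⟩
      simp only [hm1, if_pos hb]
      exact hm.symm hab
    have hfn2 : FnM (restr H Aᶜ) m2 := by
      intro a b hab
      simp only [hm2] at hab
      split_ifs at hab with h
      have hadj := hm.adj hab
      have hb : b ∈ Aᶜ := fun hb => h ((hA a b hadj).2 hb)
      refine ⟨⟨hadj, h, hb⟩, ?_⟩
      simp only [hm2, if_pos hb]
      exact hm.symm hab
    have hsplit : msupp m = msupp m1 ∪ msupp m2 := by
      ext x
      by_cases h : x ∈ A <;> simp [msupp, hm1, hm2, h]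
    have hdisj : Disjoint (msupp m1) (msupp m2) := by
      rw [Set.disjoint_left]
      intro x hx1 hx2
      simp only [msupp, Set.mem_setOf_eq, hm1, hm2] at hx1 hx2
      by_cases h : x ∈ A
      · simp [h] at hx2
      · simp [h] at hx1
    have h1 := hfn1.le_matchNum
    have h2 := hfn2.le_matchNum
    have := Set.ncard_union_eq hdisj (Set.toFinite _) (Set.toFinite _)
    rw [hsplit] at hcard
    omega
  · obtain ⟨m1, hm1, hc1⟩ := exists_max_fnM (restr H A)
    obtain ⟨m2, hm2, hc2⟩ := exists_max_fnM (restr H Aᶜ)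
    have hs1 : msupp m1 ⊆ A := by
      intro x hx
      obtain ⟨y, hy⟩ := mem_msupp.1 hx
      exact (hm1.adj hy).2.1
    have hs2 : msupp m2 ⊆ Aᶜ := by
      intro x hx
      obtain ⟨y, hy⟩ := mem_msupp.1 hx
      exact (hm2.adj hy).2.1
    set m : V → Option V := fun x => if x ∈ A then m1 x else m2 x with hmdef
    have hfn : FnM H m := by
      intro a b hab
      simp only [hmdef] at hab
      split_ifs at hab with h
      · have hb : b ∈ A := (hm1.adj hab).2.2
        exact ⟨(hm1.adj hab).1, by simp only [hmdef, if_pos hb]; exact hm1.symm hab⟩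
      · have hb : b ∈ Aᶜ := (hm2.adj hab).2.2
        exact ⟨(hm2.adj hab).1, by simp only [hmdef, if_neg hb]; exact hm2.symm hab⟩
    have hsplit : msupp m = msupp m1 ∪ msupp m2 := by
      ext x
      by_cases h : x ∈ A
      · simp only [msupp, Set.mem_setOf_eq, hmdef, if_pos h, Set.mem_union]
        have : x ∉ msupp m2 := fun hx => hs2 hx h
        simp only [msupp, Set.mem_setOf_eq] at this
        tauto
      · simp only [msupp, Set.mem_setOf_eq, hmdef, if_neg h, Set.mem_union]
        have : x ∉ msupp m1 := fun hx => h (hs1 hx)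
        simp only [msupp, Set.mem_setOf_eq] at this
        tauto
    have hdisj : Disjoint (msupp m1) (msupp m2) :=
      Set.disjoint_of_subset hs1 hs2 (disjoint_compl_right)
    have := hfn.le_matchNum
    rw [hsplit, Set.ncard_union_eq hdisj (Set.toFinite _) (Set.toFinite _), hc1, hc2] at this
    omega

end Counting

section Exchange
variable {V : Type*} [Fintype V] {H : SimpleGraph V} {m m' : V → Option V}

open Classical in
/-- alternating sequence starting at `u`, first step by `m'`, then `m`, ... -/
noncomputable def aseq (m m' : V → Option V) (u : V) : ℕ → Option V
  | 0 => some u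
  | n+1 => match aseq m m' u n with
    | none => none
    | some x => if n % 2 = 0 then m' x else m x

lemma aseq_succ_of_some {u : V} {n : ℕ} {x : V} (h : aseq m m' u n = some x) :
    aseq m m' u (n+1) = (if n % 2 = 0 then m' x else m x) := by
  rw [aseq, h]

lemma aseq_pred_some {u : V} {n : ℕ} {x : V} (h : aseq m m' u (n+1) = some x) :
    ∃ p, aseq m m' u n = some p ∧ (if n % 2 = 0 then m' p else m p) = some x := by
  cases hp : aseq m m' u n with
  | none => rw [aseq, hp] at h; exact (nomatch h)
  | some p => exact ⟨p, rfl, by rw [aseq_succ_of_some hp] at h; exact h⟩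

lemma aseq_inj (hm : FnM H m) (hm' : FnM H m') {u : V} (hu : m u = none) :
    ∀ j i x, i < j → aseq m m' u i = some x → aseq m m' u j = some x → False := by
  intro j
  induction j using Nat.strong_induction_on with
  | _ j IH =>
    intro i x hij hsi hsj
    obtain ⟨jj, rfl⟩ : ∃ jj, j = jj + 1 := ⟨j - 1, by omega⟩
    obtain ⟨p, hp, hstepj⟩ := aseq_pred_some hsj
    cases i with
    | zero =>
      have hxu : x = u := Option.some_inj.1 (hsi.symm.trans (rfl : aseq m m' u 0 = some u))
      by_cases h2 : jj % 2 = 0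
      · rw [if_pos h2] at hstepj
        have hmx : m' x = some p := hm'.symm hstepj
        by_cases hjj0 : jj = 0
        · subst hjj0
          have hpu : p = u := (Option.some_inj.1 (show (some u : Option V) = some p from hp)).symm
          exact hm'.ne hstepj (hpu.trans hxu.symm)
        · have h1 : aseq m m' u 1 = some p := by
            have h0 : aseq m m' u 0 = some u := rfl
            rw [aseq_succ_of_some h0, if_pos (by norm_num : (0:ℕ) % 2 = 0), ← hxu]
            exact hmx
          exact IH jj (by omega) 1 p (by omega) h1 hp
      · rw [if_neg h2] at hstepj
        have : m x = some p := hm.symm hstepj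
        rw [hxu, hu] at this
        exact (nomatch this)
    | succ ii =>
      obtain ⟨q, hq, hstepi⟩ := aseq_pred_some hsi
      have hiijj : ii < jj := by omega
      by_cases h2i : ii % 2 = 0 <;> by_cases h2j : jj % 2 = 0
      · rw [if_pos h2i] at hstepi
        rw [if_pos h2j] at hstepj
        have : q = p := by
          have e1 := hm'.symm hstepi
          have e2 := hm'.symm hstepj
          exact Option.some_inj.1 (e1 ▸ e2)
        subst this
        exact IH jj (by omega) ii q hiijj hq hp
      · -- ii even, jj odd
        rw [if_pos h2i] at hstepi
        rw [if_neg h2j] at hstepj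
        have hmx : m x = some p := hm.symm hstepj
        have hnext : aseq m m' u (ii + 2) = some p := by
          rw [aseq_succ_of_some hsi, if_neg (by omega)]
          exact hmx
        by_cases hji : jj = ii + 1
        · subst hji
          have : p = x := Option.some_inj.1 (hp ▸ hsi)
          subst this
          exact hm.ne hmx rfl
        · have : ii + 2 < jj := by omega
          exact IH jj (by omega) (ii + 2) p this hnext hp
      · -- ii odd, jj even
        rw [if_neg h2i] at hstepi
        rw [if_pos h2j] at hstepj
        have hmx : m' x = some p := hm'.symm hstepj
        have hnext : aseq m m' u (ii + 2) = some p := by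
          rw [aseq_succ_of_some hsi, if_pos (by omega)]
          exact hmx
        by_cases hji : jj = ii + 1
        · subst hji
          have : p = x := Option.some_inj.1 (hp ▸ hsi)
          subst this
          exact hm'.ne hmx rfl
        · have : ii + 2 < jj := by omega
          exact IH jj (by omega) (ii + 2) p this hnext hp
      · rw [if_neg h2i] at hstepi
        rw [if_neg h2j] at hstepj
        have : q = p := by
          have e1 := hm.symm hstepi
          have e2 := hm.symm hstepj
          exact Option.some_inj.1 (e1 ▸ e2)
        subst this
        exact IH jj (by omega) ii q hiijj hq hp
end Exchange

section ExchangeMain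
variable {V : Type*} [Fintype V] {H : SimpleGraph V} {m m' : V → Option V}

lemma exchange_main (hm : FnM H m) (hm' : FnM H m') {u : V}
    (hu : m u = none) (hu' : m' u ≠ none) :
    (∃ m₄, FnM H m₄ ∧ (msupp m₄).ncard = (msupp m).ncard + 2) ∨
    (∃ z m₂ m₃, z ≠ u ∧ m' z = none ∧
      FnM H m₂ ∧ (msupp m₂).ncard = (msupp m).ncard ∧ m₂ z = none ∧
        (∀ x, m x = none → x ≠ u → m₂ x = none) ∧
      FnM H m₃ ∧ (msupp m₃).ncard = (msupp m').ncard ∧ m₃ u = none ∧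
        (∀ x, m' x = none → x ≠ z → m₃ x = none)) := by
  classical
  have hinj := aseq_inj hm hm' hu
  -- termination
  have hterm : ∃ n, aseq m m' u n = none := by
    by_contra hc
    push_neg at hc
    obtain ⟨i, j, hij, hfeq⟩ := Finite.exists_ne_map_eq_of_infinite
      (fun n : ℕ => (aseq m m' u n).get (Option.ne_none_iff_isSome.1 (hc n)))
    have heq2 : aseq m m' u i = aseq m m' u j := by
      have h1 := congrArg some hfeq
      rwa [Option.some_get, Option.some_get] at h1
    have hsj : aseq m m' u j = some ((aseq m m' u j).get (Option.ne_none_iff_isSome.1 (hc j))) := by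
      rw [Option.some_get]
    have hsi : aseq m m' u i = some ((aseq m m' u j).get (Option.ne_none_iff_isSome.1 (hc j))) :=
      heq2.trans hsj
    rcases lt_or_gt_of_ne hij with h | h
    · exact hinj j i _ h hsi hsj
    · exact hinj i j _ h hsj hsi
  set N := Nat.find hterm with hNdef
  have hN : aseq m m' u N = none := Nat.find_spec hterm
  have hNmin : ∀ i, i < N → aseq m m' u i ≠ none := fun i hi => Nat.find_min hterm hi
  have hN1 : 1 ≤ N := by
    rcases Nat.eq_zero_or_pos N with h | h
    · exfalso; rw [h] at hN; exact (nomatch hN)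
    · exact h
  set t := N - 1 with htdef
  have htN : t + 1 = N := by omega
  obtain ⟨z, hz⟩ : ∃ z, aseq m m' u t = some z := by
    cases hzz : aseq m m' u t with
    | none => exact absurd hzz (hNmin t (by omega))
    | some z => exact ⟨z, rfl⟩
  have hstep_end : (if t % 2 = 0 then m' z else m z) = none := by
    have h := aseq_succ_of_some hz
    rw [htN, hN] at h
    exact h.symm
  have ht1 : 1 ≤ t := by
    by_contra h0
    have ht0 : t = 0 := by omega
    rw [ht0] at hz
    have hzu : z = u := (Option.some_inj.1 (show (some u : Option V) = some z from hz)).symm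
    rw [ht0] at hstep_end
    simp only [Nat.zero_mod, if_pos] at hstep_end
    rw [hzu] at hstep_end
    exact hu' hstep_end
  set P : Set V := {x | ∃ i ≤ t, aseq m m' u i = some x} with hPdef
  have huP : u ∈ P := ⟨0, by omega, rfl⟩
  have hzP : z ∈ P := ⟨t, le_refl t, hz⟩
  have huz : u ≠ z := by
    intro h
    rw [← h] at hz
    exact hinj t 0 u (by omega) rfl hz
  -- closure of P under m
  have hclm : ∀ x ∈ P, ∀ y, m x = some y → y ∈ P := by
    rintro x ⟨i, hit, hsi⟩ y hxy
    cases i with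
    | zero =>
      have hxu : x = u := (Option.some_inj.1 (show (some u : Option V) = some x from hsi)).symm
      rw [hxu, hu] at hxy
      exact (nomatch hxy)
    | succ ii =>
      obtain ⟨q, hq, hstepi⟩ := aseq_pred_some hsi
      by_cases h2 : ii % 2 = 0
      · by_cases hitt : ii + 1 = t
        · exfalso
          have hxz : x = z := Option.some_inj.1 ((hz.symm.trans (hitt ▸ hsi))).symm
          have htodd : t % 2 = 1 := by omega
          rw [if_neg (by omega)] at hstep_end
          rw [hxz, hstep_end] at hxy
          exact (nomatch hxy)
        · have hlt : ii + 1 < t := lt_of_le_of_ne hit hitt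
          have hnext : aseq m m' u (ii+2) = some y := by
            rw [aseq_succ_of_some hsi, if_neg (by omega)]
            exact hxy
          exact ⟨ii + 2, by omega, hnext⟩
      · rw [if_neg h2] at hstepi
        have hsymm := hm.symm hstepi
        have hyq : y = q := Option.some_inj.1 (hxy.symm.trans hsymm)
        exact ⟨ii, by omega, hyq ▸ hq⟩
  -- closure of P under m'
  have hclm' : ∀ x ∈ P, ∀ y, m' x = some y → y ∈ P := by
    rintro x ⟨i, hit, hsi⟩ y hxy
    cases i with
    | zero =>
      have hxu : x = u := (Option.some_inj.1 (show (some u : Option V) = some x from hsi)).symm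
      have hnext : aseq m m' u 1 = some y := by
        rw [aseq_succ_of_some (show aseq m m' u 0 = some u from rfl),
          if_pos (by norm_num : (0:ℕ) % 2 = 0), ← hxu]
        exact hxy
      exact ⟨1, by omega, hnext⟩
    | succ ii =>
      obtain ⟨q, hq, hstepi⟩ := aseq_pred_some hsi
      by_cases h2 : ii % 2 = 0
      · rw [if_pos h2] at hstepi
        have hsymm := hm'.symm hstepi
        have hyq : y = q := Option.some_inj.1 (hxy.symm.trans hsymm)
        exact ⟨ii, by omega, hyq ▸ hq⟩
      · by_cases hitt : ii + 1 = t
        · exfalso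
          have hxz : x = z := Option.some_inj.1 ((hz.symm.trans (hitt ▸ hsi))).symm
          rw [if_pos (by omega)] at hstep_end
          rw [hxz, hstep_end] at hxy
          exact (nomatch hxy)
        · have hlt : ii + 1 < t := lt_of_le_of_ne hit hitt
          have hnext : aseq m m' u (ii+2) = some y := by
            rw [aseq_succ_of_some hsi, if_pos (by omega)]
            exact hxy
          exact ⟨ii + 2, by omega, hnext⟩
  -- m'-matched on P except z
  have hm'mat : ∀ x ∈ P, x ≠ z → m' x ≠ none := by
    rintro x ⟨i, hit, hsi⟩ hxz
    have hilt : i < t := by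
      rcases eq_or_lt_of_le hit with h | h
      · exfalso; apply hxz
        exact Option.some_inj.1 ((hz.symm.trans (h ▸ hsi))).symm
      · exact h
    cases i with
    | zero =>
      have hxu : x = u := (Option.some_inj.1 (show (some u : Option V) = some x from hsi)).symm
      rw [hxu]; exact hu'
    | succ ii =>
      obtain ⟨q, hq, hstepi⟩ := aseq_pred_some hsi
      by_cases h2 : ii % 2 = 0
      · rw [if_pos h2] at hstepi
        rw [hm'.symm hstepi]
        exact Option.some_ne_none q
      · intro hnone
        have : aseq m m' u (ii+2) = none := by
          rw [aseq_succ_of_some hsi, if_pos (by omega)]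
          exact hnone
        exact hNmin (ii+2) (by omega) this
  -- m-matched on P except u (and except z when t odd)
  have hmmat : ∀ x ∈ P, x ≠ u → (t % 2 = 1 → x ≠ z) → m x ≠ none := by
    rintro x ⟨i, hit, hsi⟩ hxu hcond
    cases i with
    | zero =>
      exact absurd ((Option.some_inj.1 (show (some u : Option V) = some x from hsi)).symm) hxu
    | succ ii =>
      obtain ⟨q, hq, hstepi⟩ := aseq_pred_some hsi
      by_cases h2 : ii % 2 = 0
      · by_cases hitt : ii + 1 = t
        · have hxz : x = z := Option.some_inj.1 ((hz.symm.trans (hitt ▸ hsi))).symm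
          exact absurd hxz (hcond (by omega))
        · have hlt : ii + 1 < t := lt_of_le_of_ne hit hitt
          intro hnone
          have : aseq m m' u (ii+2) = none := by
            rw [aseq_succ_of_some hsi, if_neg (by omega)]
            exact hnone
          exact hNmin (ii+2) (by omega) this
      · rw [if_neg h2] at hstepi
        rw [hm.symm hstepi]
        exact Option.some_ne_none q
  -- the switched function is a matching, generally
  set mden : V → Option V := fun x => if x ∈ P then m' x else m x with hmden
  have mdeq : ∀ x, mden x = if x ∈ P then m' x else m x := fun x => rfl
  have hFnMden : FnM H mden := by
    intro a b hab
    rw [mdeq a] at hab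
    by_cases haP : a ∈ P
    · rw [if_pos haP] at hab
      have hbP : b ∈ P := hclm' a haP b hab
      exact ⟨hm'.adj hab, by rw [mdeq b, if_pos hbP]; exact hm'.symm hab⟩
    · rw [if_neg haP] at hab
      have hbP : b ∉ P := by
        intro hbP
        exact haP (hclm b hbP a (hm.symm hab))
      exact ⟨hm.adj hab, by rw [mdeq b, if_neg hbP]; exact hm.symm hab⟩
  have hsuppden : msupp mden = (msupp m' ∩ P) ∪ (msupp m \ P) := by
    ext x
    by_cases hx : x ∈ P <;>
      simp [msupp, mdeq, hx]
  have hdisjden : Disjoint (msupp m' ∩ P) (msupp m \ P) := by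
    rw [Set.disjoint_left]
    rintro x ⟨-, hxP⟩ ⟨-, hxnP⟩
    exact hxnP hxP
  have hsplitm : (msupp m).ncard = (msupp m ∩ P).ncard + (msupp m \ P).ncard := by
    rw [← Set.ncard_union_eq (Set.disjoint_of_subset_left (Set.inter_subset_right)
      Set.disjoint_sdiff_right) (Set.toFinite _) (Set.toFinite _), Set.inter_union_diff]
  have hncden : (msupp mden).ncard = (msupp m' ∩ P).ncard + (msupp m \ P).ncard := by
    rw [hsuppden, Set.ncard_union_eq hdisjden (Set.toFinite _) (Set.toFinite _)]
  by_cases htpar : t % 2 = 0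
  · -- case (b) : t even
    right
    rw [if_pos htpar] at hstep_end
    -- m' ∩ P = P \ {z}
    have hA : msupp m' ∩ P = P \ {z} := by
      ext x
      constructor
      · rintro ⟨hx', hxP⟩
        refine ⟨hxP, ?_⟩
        intro hxz
        rw [Set.mem_singleton_iff] at hxz
        rw [hxz] at hx'
        exact hx' hstep_end
      · rintro ⟨hxP, hxz⟩
        exact ⟨hm'mat x hxP hxz, hxP⟩
    have hB : msupp m ∩ P = P \ {u} := by
      ext x
      constructor
      · rintro ⟨hx', hxP⟩
        refine ⟨hxP, ?_⟩
        intro hxu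
        rw [Set.mem_singleton_iff] at hxu
        rw [hxu] at hx'
        exact hx' hu
      · rintro ⟨hxP, hxu⟩
        exact ⟨hmmat x hxP hxu (fun h => absurd htpar (by omega)), hxP⟩
    have hcA : (P \ {z}).ncard + 1 = P.ncard := Set.ncard_diff_singleton_add_one hzP (Set.toFinite _)
    have hcB : (P \ {u}).ncard + 1 = P.ncard := Set.ncard_diff_singleton_add_one huP (Set.toFinite _)
    -- the second matching m₃
    set m3 : V → Option V := fun x => if x ∈ P then m x else m' x with hm3
    have m3eq : ∀ x, m3 x = if x ∈ P then m x else m' x := fun x => rfl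
    have hFnM3 : FnM H m3 := by
      intro a b hab
      rw [m3eq a] at hab
      by_cases haP : a ∈ P
      · rw [if_pos haP] at hab
        have hbP : b ∈ P := hclm a haP b hab
        exact ⟨hm.adj hab, by rw [m3eq b, if_pos hbP]; exact hm.symm hab⟩
      · rw [if_neg haP] at hab
        have hbP : b ∉ P := by
          intro hbP
          exact haP (hclm' b hbP a (hm'.symm hab))
        exact ⟨hm'.adj hab, by rw [m3eq b, if_neg hbP]; exact hm'.symm hab⟩
    have hsupp3 : msupp m3 = (msupp m ∩ P) ∪ (msupp m' \ P) := by
      ext x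
      by_cases hx : x ∈ P <;> simp [msupp, m3eq, hx]
    have hdisj3 : Disjoint (msupp m ∩ P) (msupp m' \ P) := by
      rw [Set.disjoint_left]
      rintro x ⟨-, hxP⟩ ⟨-, hxnP⟩
      exact hxnP hxP
    have hsplitm' : (msupp m').ncard = (msupp m' ∩ P).ncard + (msupp m' \ P).ncard := by
      rw [← Set.ncard_union_eq (Set.disjoint_of_subset_left (Set.inter_subset_right)
        Set.disjoint_sdiff_right) (Set.toFinite _) (Set.toFinite _), Set.inter_union_diff]
    have hnc3 : (msupp m3).ncard = (msupp m ∩ P).ncard + (msupp m' \ P).ncard := by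
      rw [hsupp3, Set.ncard_union_eq hdisj3 (Set.toFinite _) (Set.toFinite _)]
    refine ⟨z, mden, m3, huz.symm, hstep_end, hFnMden, ?_, ?_, ?_, hFnM3, ?_, ?_, ?_⟩
    · rw [hncden, hA, hsplitm, hB]; omega
    · rw [mdeq z, if_pos hzP]; exact hstep_end
    · intro x hxnone hxu
      have hxP : x ∉ P := by
        intro hxP
        exact hmmat x hxP hxu (fun h => absurd htpar (by omega)) hxnone
      rw [mdeq x, if_neg hxP]; exact hxnone
    · rw [hnc3, hB, hsplitm', hA]; omega
    · rw [m3eq u, if_pos huP]; exact hu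
    · intro x hxnone hxz
      have hxP : x ∉ P := by
        intro hxP
        exact hm'mat x hxP hxz hxnone
      rw [m3eq x, if_neg hxP]; exact hxnone
  · -- case (a) : t odd, augmenting
    left
    rw [if_neg htpar] at hstep_end
    -- z is m'-matched: it was entered via m'
    have hm'z : m' z ≠ none := by
      obtain ⟨tt, htt⟩ : ∃ tt, t = tt + 1 := ⟨t - 1, by omega⟩
      rw [htt] at hz
      obtain ⟨q, hq, hstepz⟩ := aseq_pred_some hz
      rw [if_pos (by omega)] at hstepz
      rw [hm'.symm hstepz]
      exact Option.some_ne_none q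
    have hA : msupp m' ∩ P = P := by
      apply Set.eq_of_subset_of_subset (Set.inter_subset_right)
      intro x hxP
      by_cases hxz : x = z
      · exact ⟨by rw [hxz]; exact hm'z, hxP⟩
      · exact ⟨hm'mat x hxP hxz, hxP⟩
    have hB : msupp m ∩ P = (P \ {u}) \ {z} := by
      ext x
      constructor
      · rintro ⟨hx', hxP⟩
        refine ⟨⟨hxP, ?_⟩, ?_⟩
        · intro hxu
          rw [Set.mem_singleton_iff] at hxu
          rw [hxu] at hx'
          exact hx' hu
        · intro hxz
          rw [Set.mem_singleton_iff] at hxz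
          rw [hxz] at hx'
          exact hx' hstep_end
      · rintro ⟨⟨hxP, hxu⟩, hxz⟩
        rw [Set.mem_singleton_iff] at hxu hxz
        exact ⟨hmmat x hxP hxu (fun _ => hxz), hxP⟩
    have hzPu : z ∈ P \ {u} := ⟨hzP, fun h => huz (Set.mem_singleton_iff.1 h).symm⟩
    have hcB1 : ((P \ {u}) \ {z}).ncard + 1 = (P \ {u}).ncard :=
      Set.ncard_diff_singleton_add_one hzPu (Set.toFinite _)
    have hcB2 : (P \ {u}).ncard + 1 = P.ncard := Set.ncard_diff_singleton_add_one huP (Set.toFinite _)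
    refine ⟨mden, hFnMden, ?_⟩
    rw [hncden, hA, hsplitm, hB]
    omega

end ExchangeMain

section Gallai
variable {V : Type*} [Fintype V] {H : SimpleGraph V} {m : V → Option V}

lemma augment (hm : FnM H m) {a b : V} (hadj : H.Adj a b) (ha : m a = none) (hb : m b = none) :
    (msupp m).ncard + 2 ≤ 2 * matchNum H := by
  classical
  have hab : a ≠ b := hadj.ne
  set m2 : V → Option V := fun x => if x = a then some b else if x = b then some a else m x with hm2
  have m2eq : ∀ x, m2 x = if x = a then some b else if x = b then some a else m x := fun _ => rfl
  have hFn : FnM H m2 := by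
    intro x y hxy
    rw [m2eq x] at hxy
    split_ifs at hxy with h1 h2
    · subst h1
      have hyb : y = b := Option.some_inj.1 hxy.symm
      subst hyb
      exact ⟨hadj, by rw [m2eq y, if_neg (Ne.symm hab), if_pos rfl]⟩
    · subst h2
      have hya : y = a := Option.some_inj.1 hxy.symm
      subst hya
      exact ⟨hadj.symm, by rw [m2eq y, if_pos rfl]⟩
    · have hya : y ≠ a := by
        intro h; subst h
        rw [hm.symm hxy] at ha
        exact (nomatch ha)
      have hyb : y ≠ b := by
        intro h; subst h
        rw [hm.symm hxy] at hb
        exact (nomatch hb)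
      exact ⟨hm.adj hxy, by rw [m2eq y, if_neg hya, if_neg hyb]; exact hm.symm hxy⟩
  have hsupp : msupp m2 = insert a (insert b (msupp m)) := by
    ext x
    rcases eq_or_ne x a with rfl | hxa
    · simp [msupp, m2eq x]
    · rcases eq_or_ne x b with rfl | hxb
      · simp [msupp, m2eq x, hxa]
      · simp [msupp, m2eq x, hxa, hxb]
  have hna : a ∉ insert b (msupp m) := by
    simp [msupp, ha, hab]
  have hnb : b ∉ msupp m := by simp [msupp, hb]
  have hcard : (msupp m2).ncard = (msupp m).ncard + 2 := by
    rw [hsupp, Set.ncard_insert_of_notMem hna (Set.toFinite _),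
      Set.ncard_insert_of_notMem hnb (Set.toFinite _)]
  have := hFn.le_matchNum
  omega

lemma gallai_core (H : SimpleGraph V)
    (hins : ∀ v, deg H v ≠ 0 → matchNum (delInc H v) = matchNum H) :
    ∀ (n : ℕ) (m : V → Option V), FnM H m → (msupp m).ncard = 2 * matchNum H →
    ∀ (u v : V) (W : H.Walk u v), u ≠ v → m u = none → m v = none → W.length ≤ n → False := by
  intro n
  induction n with
  | zero =>
    intro m hm hmax u v W huv hu hv hlen
    exact huv (W.eq_of_length_eq_zero (by omega))
  | succ n IH =>
    intro m hm hmax u v W huv hu hv hlen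
    cases W with
    | nil => exact huv rfl
    | cons hadj p =>
      rename_i w
      rw [SimpleGraph.Walk.length_cons] at hlen
      by_cases hwv : w = v
      · subst hwv
        have := augment hm hadj hu hv
        omega
      · by_cases hmw : m w = none
        · exact IH m hm hmax w v p hwv hmw hv (by omega)
        · have hdegw : deg H w ≠ 0 := by
            have hne : (H.neighborSet w).Nonempty := ⟨u, hadj.symm⟩
            rw [deg]
            exact (Set.ncard_pos (Set.toFinite _)).2 hne |>.ne'
          have hdel := hins w hdegw
          obtain ⟨m', hm'fn, hm'card⟩ := exists_max_fnM (delInc H w)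
          have hm'H : FnM H m' := fnM_of_le delInc_le hm'fn
          have hm'w : m' w = none := by
            cases h : m' w with
            | none => rfl
            | some y => exact absurd rfl (hm'fn.adj h).2.1
          have hm'max : (msupp m').ncard = 2 * matchNum H := by rw [hm'card, hdel]
          by_cases hm'u : m' u = none
          · have := augment hm'H hadj hm'u hm'w
            omega
          · rcases exchange_main hm hm'H hu hm'u with
              ⟨m₄, hFn₄, hc₄⟩ |
              ⟨z, m₂, m₃, hzu, hm'z, hFn₂, hc₂, hz₂, hpres₂, hFn₃, hc₃, hu₃, hpres₃⟩
            · have := hFn₄.le_matchNum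
              omega
            · by_cases hzw : z = w
              · subst hzw
                exact IH m₂ hFn₂ (hc₂.trans hmax) z v p hwv hz₂
                  (hpres₂ v hv (Ne.symm huv)) (by omega)
              · have hm₃w : m₃ w = none := hpres₃ w hm'w (Ne.symm hzw)
                have := augment hFn₃ hadj hu₃ hm₃w
                omega
end Gallai

section CH
variable {V : Type*} [Fintype V]

theorem CHbound (d : ℕ) (hd3 : 3 ≤ d) (hdodd : d % 2 = 1) :
    ∀ (E : ℕ) (H : SimpleGraph V), edgeCount H ≤ E → (∀ v, deg H v ≤ d) → matchNum H ≤ d →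
    2 * edgeCount H ≤ 2 * (d * matchNum H) + (if d ≤ 2 * matchNum H then d - 1 else 0) := by
  classical
  intro E
  induction E with
  | zero =>
    intro H hEle _ _
    have h0 : 2 * edgeCount H = 0 := by omega
    rw [h0]
    exact Nat.zero_le _
  | succ E IH =>
    intro H hEle hdeg hnu
    by_cases hsmall : edgeCount H ≤ E
    · exact IH H hsmall hdeg hnu
    have hE : edgeCount H = E + 1 := by omega
    by_cases hcaseA : ∃ v, deg H v ≠ 0 ∧ matchNum (delInc H v) < matchNum H
    · obtain ⟨v, hdv, hlt⟩ := hcaseA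
      have h1 := edgeCount_delInc H v
      have h2 := matchNum_delInc_ge (H := H) v
      have h3 : matchNum (delInc H v) = matchNum H - 1 := by omega
      have hrec := IH (delInc H v) (by omega)
        (fun x => le_trans (deg_delInc_le H v x) (hdeg x)) (by omega)
      rw [h3] at hrec
      have hν1 : 1 ≤ matchNum H := by omega
      have key : d * matchNum H = d * (matchNum H - 1) + d := by
        calc d * matchNum H = d * ((matchNum H - 1) + 1) := by rw [Nat.sub_add_cancel hν1]
        _ = d * (matchNum H - 1) + d := by ring
      have hdegv := hdeg v
      by_cases hc' : d ≤ 2 * (matchNum H - 1)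
      · rw [if_pos hc'] at hrec
        rw [if_pos (by omega)]
        omega
      · rw [if_neg hc'] at hrec
        by_cases hc : d ≤ 2 * matchNum H
        · rw [if_pos hc]; omega
        · rw [if_neg hc]; omega
    · push_neg at hcaseA
      have hins : ∀ v, deg H v ≠ 0 → matchNum (delInc H v) = matchNum H :=
        fun v hv => le_antisymm (matchNum_mono delInc_le) (hcaseA v hv)
      obtain ⟨T, hT⟩ : ∃ T, d = 2 * T + 1 := ⟨d / 2, by omega⟩
      by_cases hsplit : ∃ A : Set V, (∀ a b, H.Adj a b → (a ∈ A ↔ b ∈ A)) ∧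
          edgeCount (restr H A) ≠ 0 ∧ edgeCount (restr H Aᶜ) ≠ 0
      · obtain ⟨A, hA, he1, he2⟩ := hsplit
        have hsplitE := edgeCount_restr_split H A hA
        have hsplitN := matchNum_restr_split H A hA
        have hrec1 := IH (restr H A) (by omega)
          (fun x => le_trans (deg_restr_le H A x) (hdeg x)) (by omega)
        have hrec2 := IH (restr H Aᶜ) (by omega)
          (fun x => le_trans (deg_restr_le H Aᶜ x) (hdeg x)) (by omega)
        have key : d * matchNum H = d * matchNum (restr H A) + d * matchNum (restr H Aᶜ) := by
          rw [hsplitN]; ring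
        by_cases hc1 : d ≤ 2 * matchNum (restr H A) <;>
          by_cases hc2 : d ≤ 2 * matchNum (restr H Aᶜ)
        · rw [if_pos hc1] at hrec1; rw [if_pos hc2] at hrec2
          rw [if_pos (by omega)]
          omega
        · rw [if_pos hc1] at hrec1; rw [if_neg hc2] at hrec2
          rw [if_pos (by omega)]
          omega
        · rw [if_neg hc1] at hrec1; rw [if_pos hc2] at hrec2
          rw [if_pos (by omega)]
          omega
        · rw [if_neg hc1] at hrec1; rw [if_neg hc2] at hrec2
          by_cases hc : d ≤ 2 * matchNum H
          · rw [if_pos hc]; omega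
          · rw [if_neg hc]; omega
      · -- connected case: use Gallai
        set msupport : Set V := {x | deg H x ≠ 0} with hsuppdef
        have hn' : msupport.ncard ≤ 2 * matchNum H + 1 := by
          by_contra hbig
          push_neg at hbig
          obtain ⟨m, hm, hmax⟩ := exists_max_fnM H
          have hsub : msupp m ⊆ msupport := by
            intro x hx
            obtain ⟨y, hy⟩ := mem_msupp.1 hx
            have : y ∈ H.neighborSet x := hm.adj hy
            have hne : (H.neighborSet x).Nonempty := ⟨y, this⟩
            exact ((Set.ncard_pos (Set.toFinite _)).2 hne).ne'
          have hdiffc : (msupport \ msupp m).ncard = msupport.ncard - (msupp m).ncard :=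
            Set.ncard_diff hsub (Set.toFinite _)
          have hdiff : 1 < (msupport \ msupp m).ncard := by omega
          rw [Set.one_lt_ncard_iff (Set.toFinite _)] at hdiff
          obtain ⟨u, v, hu, hv, huv⟩ := hdiff
          have hum : m u = none := by
            by_contra h
            exact hu.2 h
          have hvm : m v = none := by
            by_contra h
            exact hv.2 h
          have hud : deg H u ≠ 0 := hu.1
          have hvd : deg H v ≠ 0 := hv.1
          have hreach : H.Reachable u v := by
            by_contra hnr
            refine hsplit ⟨{x | H.Reachable u x}, ?_, ?_, ?_⟩
            · intro a b hab
              exact ⟨fun h => h.trans hab.reachable, fun h => h.trans hab.symm.reachable⟩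
            · obtain ⟨y, hy⟩ : (H.neighborSet u).Nonempty := by
                rw [← Set.ncard_pos (Set.toFinite _)]
                exact Nat.pos_of_ne_zero hud
              have hedge : s(u, y) ∈ (restr H {x | H.Reachable u x}).edgeSet := by
                refine (SimpleGraph.mem_edgeSet _).2 ⟨hy, Reachable.refl u, ?_⟩
                exact SimpleGraph.Adj.reachable hy
              have : ((restr H {x | H.Reachable u x}).edgeSet).Nonempty := ⟨_, hedge⟩
              exact ((Set.ncard_pos (Set.toFinite _)).2 this).ne'
            · obtain ⟨y, hy⟩ : (H.neighborSet v).Nonempty := by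
                rw [← Set.ncard_pos (Set.toFinite _)]
                exact Nat.pos_of_ne_zero hvd
              have hyA : ¬ H.Reachable u y := by
                intro h
                exact hnr (h.trans (SimpleGraph.Adj.reachable (hy : H.Adj v y).symm))
              have hedge : s(v, y) ∈ (restr H {x | H.Reachable u x}ᶜ).edgeSet := by
                exact (SimpleGraph.mem_edgeSet _).2 ⟨hy, hnr, hyA⟩
              have : ((restr H {x | H.Reachable u x}ᶜ).edgeSet).Nonempty := ⟨_, hedge⟩
              exact ((Set.ncard_pos (Set.toFinite _)).2 this).ne'
          obtain ⟨W⟩ := hreach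
          exact gallai_core H hins W.length m hm hmax u v W huv hum hvm le_rfl
        have hhs := handshake H
        have hss : ∑ x ∈ msupport.toFinset, deg H x = ∑ x, deg H x := by
          apply Finset.sum_subset (Finset.subset_univ _)
          intro x _ hx
          rw [Set.mem_toFinset] at hx
          have : ¬ deg H x ≠ 0 := hx
          omega
        have hcard : msupport.toFinset.card = msupport.ncard :=
          (Set.ncard_eq_toFinset_card' _).symm
        by_cases hc : d ≤ 2 * matchNum H
        · rw [if_pos hc]
          have hbound : ∑ x ∈ msupport.toFinset, deg H x ≤ msupport.toFinset.card * d := by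
            calc ∑ x ∈ msupport.toFinset, deg H x ≤ ∑ _x ∈ msupport.toFinset, d :=
              Finset.sum_le_sum (fun x _ => hdeg x)
            _ = msupport.toFinset.card * d := by rw [Finset.sum_const, smul_eq_mul]
          rw [hcard] at hbound
          have h7 : msupport.ncard * d ≤ (2 * matchNum H + 1) * d := Nat.mul_le_mul_right d hn'
          have h8 : (2 * matchNum H + 1) * d = 2 * (d * matchNum H) + d := by ring
          omega
        · rw [if_neg hc]
          have hdd : ∀ x ∈ msupport.toFinset, deg H x ≤ msupport.ncard - 1 := by
            intro x hx
            have hxs : x ∈ msupport := Set.mem_toFinset.1 hx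
            have hsubn : H.neighborSet x ⊆ msupport \ {x} := by
              intro y hy
              refine ⟨?_, ?_⟩
              · have : x ∈ H.neighborSet y := (hy : H.Adj x y).symm
                exact ((Set.ncard_pos (Set.toFinite _)).2 ⟨x, this⟩).ne'
              · exact fun h => (hy : H.Adj x y).ne (Set.mem_singleton_iff.1 h).symm
            have g1 := Set.ncard_le_ncard hsubn (Set.toFinite _)
            have g2 := Set.ncard_diff_singleton_add_one hxs (Set.toFinite (msupport))
            rw [deg]
            omega
          have hbound : ∑ x ∈ msupport.toFinset, deg H x ≤
              msupport.toFinset.card * (msupport.ncard - 1) := by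
            calc ∑ x ∈ msupport.toFinset, deg H x ≤ ∑ _x ∈ msupport.toFinset, (msupport.ncard - 1) :=
              Finset.sum_le_sum hdd
            _ = _ := by rw [Finset.sum_const, smul_eq_mul]
          rw [hcard] at hbound
          have h5 : msupport.ncard * (msupport.ncard - 1) ≤ (2 * matchNum H + 1) * (2 * matchNum H) :=
            Nat.mul_le_mul hn' (by omega)
          have h6 : (2 * matchNum H + 1) * (2 * matchNum H) ≤ d * (2 * matchNum H) :=
            Nat.mul_le_mul_right _ (by omega)
          have h7 : d * (2 * matchNum H) = 2 * (d * matchNum H) := by ring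
          omega
end CH

section Transfer
variable {V : Type*} [Fintype V] {W : Type*} [Fintype W]

lemma matching_toFn {G : SimpleGraph V} {M : G.Subgraph} (hM : M.IsMatching) :
    ∃ m, FnM G m ∧ msupp m = M.verts := by
  classical
  refine ⟨fun v => if h : v ∈ M.verts then some (hM h).choose else none, ?_, ?_⟩
  · intro u v huv
    by_cases h : u ∈ M.verts
    · simp only [dif_pos h] at huv
      have hadj : M.Adj u v := by
        have := (hM h).choose_spec.1; rwa [Option.some_inj.1 huv] at this
      have hv : v ∈ M.verts := M.edge_vert hadj.symm
      refine ⟨M.adj_sub hadj, ?_⟩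
      simp only [dif_pos hv, Option.some_inj]
      exact ((hM hv).choose_spec.2 u hadj.symm).symm
    · simp only [dif_neg h] at huv
      exact (nomatch huv)
  · ext v; by_cases h : v ∈ M.verts <;> simp [msupp, h]

lemma clique_matching (H : SimpleGraph V) : ∀ (mm : ℕ) (T : Set V), T.ncard = 2 * mm →
    (∀ x ∈ T, ∀ y ∈ T, x ≠ y → H.Adj x y) → ∃ m, FnM H m ∧ msupp m = T := by
  classical
  intro mm
  induction mm with
  | zero =>
    intro T hT _
    have : T = ∅ := by
      rw [← Set.ncard_eq_zero (Set.toFinite _)]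
      omega
    exact ⟨fun _ => none, fun u v h => (nomatch h), by
      simp [msupp, this]⟩
  | succ mm IH =>
    intro T hT hadj
    have h2 : 1 < T.ncard := by omega
    rw [Set.one_lt_ncard_iff (Set.toFinite _)] at h2
    obtain ⟨x, y, hx, hy, hxy⟩ := h2
    set T' : Set V := T \ {x, y} with hT'
    have hcard' : T'.ncard = 2 * mm := by
      have e1 : ((T \ {x}) \ {y}).ncard + 1 = (T \ {x}).ncard :=
        Set.ncard_diff_singleton_add_one ⟨hy, fun h => hxy (Set.mem_singleton_iff.1 h).symm⟩
          (Set.toFinite _)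
      have e2 : (T \ {x}).ncard + 1 = T.ncard := Set.ncard_diff_singleton_add_one hx (Set.toFinite _)
      have e3 : T' = (T \ {x}) \ {y} := by
        rw [hT', Set.diff_diff, Set.singleton_union]
      rw [e3]
      omega
    obtain ⟨m', hm', hsupp'⟩ := IH T' hcard' (fun a ha b hb hab => hadj a ha.1 b hb.1 hab)
    set m : V → Option V := fun z => if z = x then some y else if z = y then some x else m' z with hm
    have meq : ∀ z, m z = if z = x then some y else if z = y then some x else m' z := fun _ => rfl
    have hsub' : ∀ {a b}, m' a = some b → a ∈ T' ∧ b ∈ T' := by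
      intro a b hab
      constructor
      · rw [← hsupp']; simp [msupp, hab]
      · rw [← hsupp']; simp [msupp, hm'.symm hab]
    refine ⟨m, ?_, ?_⟩
    · intro a b hab
      rw [meq a] at hab
      split_ifs at hab with h1 h2
      · subst h1
        have : b = y := Option.some_inj.1 hab.symm
        subst this
        exact ⟨hadj a hx b hy hxy, by rw [meq b, if_neg (Ne.symm hxy), if_pos rfl]⟩
      · subst h2
        have : b = x := Option.some_inj.1 hab.symm
        subst this
        exact ⟨hadj a hy b hx (Ne.symm hxy), by rw [meq b, if_pos rfl]⟩
      · have hmem := hsub' hab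
        have hbx : b ≠ x := fun h => hmem.2.2 (by simp [h])
        have hby : b ≠ y := fun h => hmem.2.2 (by simp [h])
        exact ⟨hm'.adj hab, by rw [meq b, if_neg hbx, if_neg hby]; exact hm'.symm hab⟩
    · ext z
      rcases eq_or_ne z x with rfl | hzx
      · simp [msupp, meq z, hx]
      · rcases eq_or_ne z y with rfl | hzy
        · simp [msupp, meq z, hzx, hy]
        · have : z ∈ msupp m ↔ z ∈ msupp m' := by simp [msupp, meq z, hzx, hzy]
          rw [this, hsupp']
          simp [hT', hzx, hzy]

lemma preim_ncard (f : W ≃ V) (s : Set V) : (⇑f ⁻¹' s).ncard = s.ncard := by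
  have h1 : ⇑f ⁻¹' s = ⇑f.symm '' s := by
    ext x
    simp only [Set.mem_preimage, Set.mem_image]
    constructor
    · intro h; exact ⟨f x, h, by simp⟩
    · rintro ⟨y, hy, rfl⟩; simpa using hy
  rw [h1, Set.ncard_image_of_injective _ f.symm.injective]

-- transfers along an equivalence
lemma deg_comap (f : W ≃ V) (G : SimpleGraph V) (x : W) :
    deg (G.comap ⇑f) x = deg G (f x) := by
  have : (G.comap ⇑f).neighborSet x = ⇑f ⁻¹' (G.neighborSet (f x)) := rfl
  rw [deg, this, preim_ncard, deg]

lemma edgeCount_comap (f : W ≃ V) (G : SimpleGraph V) :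
    edgeCount (G.comap ⇑f) = edgeCount G := by
  have himg : Sym2.map ⇑f '' (G.comap ⇑f).edgeSet = G.edgeSet := by
    ext e
    induction e with
    | h a b =>
      simp only [Set.mem_image]
      constructor
      · rintro ⟨e', he', heq⟩
        revert he' heq
        induction e' with
        | h c d =>
          intro he' heq
          rw [Sym2.map_pair_eq] at heq
          rw [← heq]
          exact he'
      · intro h
        refine ⟨s(f.symm a, f.symm b), ?_, ?_⟩
        · show G.Adj (f (f.symm a)) (f (f.symm b))
          simpa using h
        · rw [Sym2.map_pair_eq]
          simp
  rw [edgeCount, edgeCount, ← himg,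
    Set.ncard_image_of_injective _ (Sym2.map.injective f.injective)]

lemma matchNum_comap_le (f : W ≃ V) (G : SimpleGraph V) :
    matchNum G ≤ matchNum (G.comap ⇑f) := by
  obtain ⟨m, hm, hcard⟩ := exists_max_fnM G
  set m' : W → Option W := fun x => (m (f x)).map ⇑f.symm with hm'
  have m'eq : ∀ x, m' x = (m (f x)).map ⇑f.symm := fun _ => rfl
  have hfn : FnM (G.comap ⇑f) m' := by
    intro a b hab
    rw [m'eq a] at hab
    obtain ⟨c, hc, hcb⟩ := Option.map_eq_some_iff.1 hab
    have hfb : f b = c := by rw [← hcb]; simp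
    refine ⟨?_, ?_⟩
    · show G.Adj (f a) (f b)
      rw [hfb]
      exact hm.adj hc
    · rw [m'eq b, hfb, hm.symm hc]
      simp
  have hsupp : msupp m' = ⇑f ⁻¹' msupp m := by
    ext x
    simp [msupp, m'eq x, Option.map_eq_none_iff]
  have hcard' : (msupp m').ncard = (msupp m).ncard := by
    rw [hsupp, preim_ncard]
  have := hfn.le_matchNum
  omega

lemma matchNum_comap (f : W ≃ V) (G : SimpleGraph V) :
    matchNum (G.comap ⇑f) = matchNum G := by
  refine le_antisymm ?_ (matchNum_comap_le f G)
  have hGG : (G.comap ⇑f).comap ⇑f.symm = G := by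
    ext a b
    show G.Adj (f (f.symm a)) (f (f.symm b)) ↔ G.Adj a b
    simp
  have := matchNum_comap_le f.symm (G.comap ⇑f)
  rwa [hGG] at this

end Transfer

/-- For even `k ≥ 4`, the disjoint union of `K_{k-1}` and a nearly `(k-1)`-regular
factor-critical graph on `k+1` vertices is extremal for `f(k-1, k-1)`. -/
theorem stmt13 {V : Type*} [Fintype V] (k : ℕ) (hk : 4 ≤ k) (hkeven : Even k)
    (hcard : Fintype.card V = 2 * k) (S : Set V) (hS : S.ncard = k - 1)
    (G : SimpleGraph V)
    (hclique : ∀ u ∈ S, ∀ v ∈ S, u ≠ v → G.Adj u v)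
    (hnoextra : ∀ u v, G.Adj u v → ((u ∈ S ∧ v ∈ S) ∨ (u ∈ Sᶜ ∧ v ∈ Sᶜ)))
    (w : V) (hwC : w ∈ Sᶜ) (hw : deg G w = k - 2)
    (hreg : ∀ u ∈ Sᶜ, u ≠ w → deg G u = k - 1)
    (hfc : ∀ v ∈ Sᶜ, ∃ M : G.Subgraph, M.IsMatching ∧ M.verts = Sᶜ \ {v}) :
    matchNum G = k - 1 ∧ maxDeg G = k - 1 ∧
    edgeCount G = fMax (k - 1) (k - 1) := by
  classical
  obtain ⟨j0, hj0⟩ := hkeven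
  obtain ⟨a, ha⟩ : ∃ a, k = 2 * a + 4 := ⟨j0 - 2, by omega⟩
  have hj2 : k = 2 * (a + 2) := by omega
  have hSc : Sᶜ.ncard = k + 1 := by
    have h1 := Set.ncard_add_ncard_compl S
    rw [Nat.card_eq_fintype_card, hcard] at h1
    omega
  -- degrees inside S
  have hnbrS : ∀ u ∈ S, G.neighborSet u = S \ {u} := by
    intro u hu
    ext y
    constructor
    · intro hy
      rcases hnoextra u y hy with ⟨h1, h2⟩ | ⟨h1, h2⟩
      · exact ⟨h2, fun h => (hy : G.Adj u y).ne (Set.mem_singleton_iff.1 h).symm⟩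
      · exact absurd hu h1
    · rintro ⟨hyS, hyne⟩
      exact hclique u hu y hyS (fun h => hyne (Set.mem_singleton_iff.2 h.symm))
  have hdegS : ∀ u ∈ S, deg G u = k - 2 := by
    intro u hu
    rw [deg, hnbrS u hu]
    have h1 := Set.ncard_diff_singleton_add_one hu (Set.toFinite S)
    omega
  have hdegle : ∀ v, deg G v ≤ k - 1 := by
    intro v
    by_cases hv : v ∈ S
    · rw [hdegS v hv]; omega
    · by_cases hvw : v = w
      · rw [hvw, hw]; omega
      · rw [hreg v hv hvw]
  -- closures
  have hclS : ∀ x ∈ S, ∀ y, G.Adj x y → y ∈ S := by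
    intro x hx y hxy
    rcases hnoextra x y hxy with ⟨-, h2⟩ | ⟨h1, -⟩
    · exact h2
    · exact absurd hx h1
  have hclSc : ∀ x ∈ Sᶜ, ∀ y, G.Adj x y → y ∈ Sᶜ := by
    intro x hx y hxy
    rcases hnoextra x y hxy with ⟨h1, -⟩ | ⟨-, h2⟩
    · exact absurd h1 hx
    · exact h2
  -- even intersection helper
  have heven : ∀ (m : V → Option V), FnM G m → ∀ (A : Set V),
      (∀ x ∈ A, ∀ y, G.Adj x y → y ∈ A) → ∃ t, (msupp m ∩ A).ncard = 2 * t := by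
    intro m hm A hA
    set m1 : V → Option V := fun x => if x ∈ A then m x else none with hm1def
    have m1eq : ∀ x, m1 x = if x ∈ A then m x else none := fun _ => rfl
    have hfn : FnM G m1 := by
      intro p q hpq
      rw [m1eq p] at hpq
      split_ifs at hpq with h
      have hq : q ∈ A := hA p h q (hm.adj hpq)
      exact ⟨hm.adj hpq, by rw [m1eq q, if_pos hq]; exact hm.symm hpq⟩
    have hsupp1 : msupp m1 = msupp m ∩ A := by
      ext x; by_cases h : x ∈ A <;> simp [msupp, m1eq x, h]
    refine ⟨hfn.toSubgraph.edgeSet.ncard, ?_⟩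
    rw [← hsupp1]
    exact matching_verts_ncard hfn.toSubgraph_isMatching
  -- matching number upper bound
  have hub : matchNum G ≤ k - 1 := by
    obtain ⟨m, hm, hmax⟩ := exists_max_fnM G
    obtain ⟨t1, ht1⟩ := heven m hm S hclS
    obtain ⟨t2, ht2⟩ := heven m hm Sᶜ hclSc
    have hsplit : (msupp m).ncard = (msupp m ∩ S).ncard + (msupp m ∩ Sᶜ).ncard := by
      rw [← Set.ncard_union_eq (Set.disjoint_of_subset Set.inter_subset_right
        Set.inter_subset_right disjoint_compl_right) (Set.toFinite _) (Set.toFinite _),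
        Set.inter_union_compl]
    have hb1 : (msupp m ∩ S).ncard ≤ k - 1 := by
      have := Set.ncard_le_ncard (Set.inter_subset_right (s := msupp m) (t := S)) (Set.toFinite _)
      omega
    have hb2 : (msupp m ∩ Sᶜ).ncard ≤ k + 1 := by
      have := Set.ncard_le_ncard (Set.inter_subset_right (s := msupp m) (t := Sᶜ)) (Set.toFinite _)
      omega
    omega
  -- matching number lower bound
  have hlb : k - 1 ≤ matchNum G := by
    obtain ⟨M, hM, hMverts⟩ := hfc w hwC
    obtain ⟨m2, hm2, hsupp2⟩ := matching_toFn hM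
    rw [hMverts] at hsupp2
    obtain ⟨s₀, hs₀⟩ : S.Nonempty := by
      rw [← Set.ncard_pos (Set.toFinite _)]
      omega
    have hcardT : (S \ {s₀}).ncard = 2 * (a + 1) := by
      have := Set.ncard_diff_singleton_add_one hs₀ (Set.toFinite S)
      omega
    obtain ⟨m1, hm1, hsupp1⟩ := clique_matching G (a + 1) (S \ {s₀}) hcardT
      (fun x hx y hy hxy => hclique x hx.1 y hy.1 hxy)
    set m : V → Option V := fun x => if x ∈ S then m1 x else m2 x with hmdef
    have meq : ∀ x, m x = if x ∈ S then m1 x else m2 x := fun _ => rfl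
    have hs1 : msupp m1 ⊆ S := by rw [hsupp1]; exact Set.diff_subset
    have hs2 : msupp m2 ⊆ Sᶜ := by rw [hsupp2]; exact Set.diff_subset
    have hfn : FnM G m := by
      intro p q hpq
      rw [meq p] at hpq
      split_ifs at hpq with h
      · have hq : q ∈ S := hs1 (by simp [msupp, hm1.symm hpq])
        exact ⟨hm1.adj hpq, by rw [meq q, if_pos hq]; exact hm1.symm hpq⟩
      · have hq : q ∈ Sᶜ := hs2 (by simp [msupp, hm2.symm hpq])
        exact ⟨hm2.adj hpq, by rw [meq q, if_neg hq]; exact hm2.symm hpq⟩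
    have hsupp : msupp m = msupp m1 ∪ msupp m2 := by
      ext x
      by_cases h : x ∈ S
      · have hx2 : x ∉ msupp m2 := fun hx => hs2 hx h
        simp only [msupp, Set.mem_setOf_eq, meq x, if_pos h, Set.mem_union]
        simp only [msupp, Set.mem_setOf_eq] at hx2
        tauto
      · have hx1 : x ∉ msupp m1 := fun hx => h (hs1 hx)
        simp only [msupp, Set.mem_setOf_eq, meq x, if_neg h, Set.mem_union]
        simp only [msupp, Set.mem_setOf_eq] at hx1
        tauto
    have hdisj : Disjoint (msupp m1) (msupp m2) :=
      Set.disjoint_of_subset hs1 hs2 disjoint_compl_right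
    have hc2 : (msupp m2).ncard = k := by
      rw [hsupp2]
      have := Set.ncard_diff_singleton_add_one hwC (Set.toFinite Sᶜ)
      omega
    have hle := hfn.le_matchNum
    rw [hsupp, Set.ncard_union_eq hdisj (Set.toFinite _) (Set.toFinite _), hsupp1] at hle
    rw [hcardT, hc2] at hle
    omega
  have hmatch : matchNum G = k - 1 := le_antisymm hub hlb
  -- max degree
  have hex : ∃ u, u ∈ Sᶜ ∧ u ≠ w := by
    have h2 : 1 < Sᶜ.ncard := by omega
    rw [Set.one_lt_ncard_iff (Set.toFinite _)] at h2
    obtain ⟨p, q, hp, hq, hpq⟩ := h2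
    by_cases hpw : p = w
    · exact ⟨q, hq, fun h => hpq (by rw [hpw, h])⟩
    · exact ⟨p, hp, hpw⟩
  have hmaxdeg : maxDeg G = k - 1 := by
    obtain ⟨u, hu, huw⟩ := hex
    have hbdd : BddAbove (Set.range (deg G)) := ⟨k - 1, by rintro x ⟨v, rfl⟩; exact hdegle v⟩
    apply le_antisymm
    · refine csSup_le ⟨deg G w, w, rfl⟩ ?_
      rintro x ⟨v, rfl⟩
      exact hdegle v
    · exact le_csSup hbdd ⟨u, hreg u hu huw⟩
  -- edge count
  have hsum := handshake G
  have hScF : Sᶜ.toFinset = S.toFinsetᶜ := by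
    ext x; simp
  have hsum_split : ∑ x ∈ S.toFinsetᶜ, deg G x + ∑ x ∈ S.toFinset, deg G x = ∑ x, deg G x :=
    Finset.sum_compl_add_sum S.toFinset (deg G)
  have hsumS : ∑ x ∈ S.toFinset, deg G x = (k - 1) * (k - 2) := by
    rw [Finset.sum_congr rfl (fun x hx => hdegS x (Set.mem_toFinset.1 hx)),
      Finset.sum_const, smul_eq_mul, ← Set.ncard_eq_toFinset_card', hS]
  have hwmem : w ∈ S.toFinsetᶜ := by
    rw [← hScF, Set.mem_toFinset]
    exact hwC
  have hsumSc : ∑ x ∈ S.toFinsetᶜ, deg G x = k * (k - 1) + (k - 2) := by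
    rw [← Finset.sum_erase_add _ _ hwmem, hw]
    congr 1
    have hcongr : ∀ x ∈ (S.toFinsetᶜ).erase w, deg G x = k - 1 := by
      intro x hx
      obtain ⟨hxw, hxc⟩ := Finset.mem_erase.1 hx
      rw [← hScF, Set.mem_toFinset] at hxc
      exact hreg x hxc hxw
    rw [Finset.sum_congr rfl hcongr, Finset.sum_const, smul_eq_mul,
      Finset.card_erase_of_mem hwmem, ← hScF, ← Set.ncard_eq_toFinset_card', hSc,
      Nat.add_sub_cancel]
  have hE : edgeCount G = (a + 2) * (4 * a + 5) := by
    have p1 : (k - 1) * (k - 2) = (2 * a + 3) * (2 * a + 2) := by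
      rw [show k - 1 = 2 * a + 3 by omega, show k - 2 = 2 * a + 2 by omega]
    have p2 : k * (k - 1) = (2 * a + 4) * (2 * a + 3) := by
      rw [ha, show 2 * a + 4 - 1 = 2 * a + 3 by omega]
    have q1 : (2 * a + 3) * (2 * a + 2) = 4 * (a * a) + 10 * a + 6 := by ring
    have q2 : (2 * a + 4) * (2 * a + 3) = 4 * (a * a) + 14 * a + 12 := by ring
    have q3 : (a + 2) * (4 * a + 5) = 4 * (a * a) + 13 * a + 10 := by ring
    omega
  -- fMax
  have hCH : ∀ (n : ℕ) (Hn : SimpleGraph (Fin n)), matchNum Hn ≤ k - 1 →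
      (∀ v, deg Hn v ≤ k - 1) → edgeCount Hn ≤ (a + 2) * (4 * a + 5) := by
    intro n Hn h1 h2
    have hch := CHbound (k - 1) (by omega) (by omega) (edgeCount Hn) Hn le_rfl h2 h1
    have hmul : (k - 1) * matchNum Hn ≤ (k - 1) * (k - 1) := Nat.mul_le_mul_left (k - 1) h1
    have hdd : (k - 1) * (k - 1) = (2 * a + 3) * (2 * a + 3) := by
      rw [show k - 1 = 2 * a + 3 by omega]
    have q4 : (2 * a + 3) * (2 * a + 3) = 4 * (a * a) + 12 * a + 9 := by ring
    have q3 : (a + 2) * (4 * a + 5) = 4 * (a * a) + 13 * a + 10 := by ring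
    by_cases hc : k - 1 ≤ 2 * matchNum Hn
    · rw [if_pos hc] at hch; omega
    · rw [if_neg hc] at hch; omega
  set f : Fin (2 * k) ≃ V := (Fintype.equivFinOfCardEq hcard).symm with hfdef
  have hmember : edgeCount G ∈ {m | ∃ (n : ℕ) (Gn : SimpleGraph (Fin n)),
      matchNum Gn ≤ k - 1 ∧ (∀ v, deg Gn v ≤ k - 1) ∧ edgeCount Gn = m} := by
    refine ⟨2 * k, G.comap ⇑f, ?_, ?_, ?_⟩
    · rw [matchNum_comap, hmatch]
    · intro v; rw [deg_comap]; exact hdegle _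
    · rw [edgeCount_comap]
  have hboundall : ∀ x ∈ {m | ∃ (n : ℕ) (Gn : SimpleGraph (Fin n)),
      matchNum Gn ≤ k - 1 ∧ (∀ v, deg Gn v ≤ k - 1) ∧ edgeCount Gn = m}, x ≤ edgeCount G := by
    rintro x ⟨n, Hn, h1, h2, rfl⟩
    rw [hE]
    exact hCH n Hn h1 h2
  have hfmax : edgeCount G = fMax (k - 1) (k - 1) := by
    apply le_antisymm
    · exact le_csSup ⟨edgeCount G, hboundall⟩ hmember
    · exact csSup_le ⟨edgeCount G, hmember⟩ hboundall
  exact ⟨hmatch, hmaxdeg, hfmax⟩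
end

section
/- Let H be a graph with ν(H) ≤ k−1, Δ(H) ≤ k−1, and e(H) = f(k−1,k−1) (k ≥ 4 even). Let (D,A,C) be the Gallai–Edmonds decomposition of H. Then A is an independent set in H and every vertex of A has degree exactly k−1 in H. -/
open SimpleGraph

/-! Suppose a vertex `u ∈ A` had degree below `k - 1`, or two vertices `u, v ∈ A` were adjacent.
Add a new vertex joined to `u` (respectively, subdivide the edge `uv` by a new vertex). Vertices of
`A` are covered by every maximum matching, so a matching through the new vertex restricts to a
non-maximum matching of `H`: the matching number does not grow. Degrees stay at most `k - 1` while
the edge count grows by one, contradicting extremality. -/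

namespace SimpleGraph

variable {V W : Type*}

lemma deg_mono [Finite V] {G G' : SimpleGraph V} (h : G ≤ G') (v : V) : deg G v ≤ deg G' v :=
  Set.ncard_le_ncard (fun _ hw => h hw) (Set.toFinite _)

lemma deg_deleteEdges_add_one [Finite V] {G : SimpleGraph V} {u v : V} (huv : G.Adj u v) :
    deg (G.deleteEdges {s(u, v)}) u + 1 = deg G u := by
  have : (G.deleteEdges {s(u, v)}).neighborSet u = G.neighborSet u \ {v} := by
    ext w; simp [huv.ne, and_comm]
  rw [deg, deg, this]
  exact Set.ncard_sdiff_singleton_add_one huv (Set.toFinite _)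

lemma edgeCount_deleteEdges_add_one [Finite V] {G : SimpleGraph V} {e : Sym2 V}
    (he : e ∈ G.edgeSet) :
    edgeCount (G.deleteEdges {e}) + 1 = edgeCount G := by
  rw [edgeCount, edgeCount, edgeSet_deleteEdges]
  exact Set.ncard_sdiff_singleton_add_one he (Set.toFinite _)

lemma Iso.deg_eq {G : SimpleGraph V} {G' : SimpleGraph W} (φ : G ≃g G') (v : V) :
    deg G' (φ v) = deg G v :=
  Nat.card_congr (φ.mapNeighborSet v).symm

lemma Iso.edgeCount_eq {G : SimpleGraph V} {G' : SimpleGraph W} (φ : G ≃g G') :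
    edgeCount G' = edgeCount G :=
  Nat.card_congr φ.mapEdgeSet.symm

lemma matchNum_le_of_forall {G : SimpleGraph V} {c : ℕ}
    (h : ∀ M : G.Subgraph, M.IsMatching → M.edgeSet.ncard ≤ c) : matchNum G ≤ c :=
  csSup_le ⟨0, ⊥, fun _ hv => hv.elim, by simp⟩ (by rintro _ ⟨M, hM, rfl⟩; exact h M hM)

lemma Subgraph.IsMatching.ncard_edgeSet_le_matchNum [Finite V] {G : SimpleGraph V}
    {M : G.Subgraph} (hM : M.IsMatching) : M.edgeSet.ncard ≤ matchNum G :=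
  le_csSup ⟨G.edgeSet.ncard, by
    rintro _ ⟨N, -, rfl⟩; exact Set.ncard_le_ncard N.edgeSet_subset (Set.toFinite _)⟩ ⟨M, hM, rfl⟩

lemma matchNum_le_of_embedding [Finite W] {G : SimpleGraph V} {G' : SimpleGraph W}
    (f : G ↪g G') : matchNum G ≤ matchNum G' :=
  matchNum_le_of_forall fun M hM => by
    have := (hM.map f.toHom f.injective).ncard_edgeSet_le_matchNum
    rwa [Subgraph.edgeSet_map,
      Set.ncard_image_of_injective _ (Sym2.map.injective (f := f.toHom) f.injective)] at this

lemma edgeCount_le_fMax [Fintype V] {G : SimpleGraph V} {ν Δ : ℕ} (hpos : 0 < fMax ν Δ)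
    (hν : matchNum G ≤ ν) (hΔ : ∀ v, deg G v ≤ Δ) : edgeCount G ≤ fMax ν Δ := by
  have hbdd : BddAbove {m | ∃ (n : ℕ) (G : SimpleGraph (Fin n)),
      matchNum G ≤ ν ∧ (∀ v, deg G v ≤ Δ) ∧ edgeCount G = m} := by
    by_contra h
    rw [fMax, csSup_of_not_bddAbove h, csSup_empty] at hpos
    exact hpos.false
  let φ := G.overFinIso rfl
  refine le_csSup hbdd ⟨_, G.overFin rfl, (matchNum_le_of_embedding φ.symm.toEmbedding).trans hν,
    fun v => ?_, φ.edgeCount_eq⟩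
  rw [← φ.apply_symm_apply v, φ.deg_eq]
  exact hΔ _

def addVertex (G : SimpleGraph V) (P : Set V) : SimpleGraph (Option V) where
  Adj
    | some a, some b => G.Adj a b
    | some a, none => a ∈ P
    | none, some b => b ∈ P
    | none, none => False
  symm := ⟨by
    rintro (_ | a) (_ | b) h
    exacts [h, h, h, G.symm.symm _ _ h]⟩
  loopless := ⟨by
    rintro (_ | a) h
    exacts [h, G.loopless.irrefl a h]⟩

section addVertex

variable {G : SimpleGraph V} {P : Set V}

@[simp] lemma addVertex_adj_some_some {a b : V} :
    (G.addVertex P).Adj (some a) (some b) ↔ G.Adj a b := Iff.rfl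

@[simp] lemma addVertex_adj_some_none {a : V} : (G.addVertex P).Adj (some a) none ↔ a ∈ P :=
  Iff.rfl

@[simp] lemma addVertex_adj_none_some {b : V} : (G.addVertex P).Adj none (some b) ↔ b ∈ P :=
  Iff.rfl

lemma edgeSet_addVertex :
    (G.addVertex P).edgeSet = Sym2.map some '' G.edgeSet ∪ (fun a => s(none, some a)) '' P := by
  ext e
  induction e using Sym2.ind with
  | _ x y =>
    cases x <;> cases y <;> simp [Sym2.exists, Sym2.eq_swap (a := none)]
    exact ⟨fun h => ⟨_, _, h, .inl ⟨rfl, rfl⟩⟩,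
      by rintro ⟨x, y, h, ⟨rfl, rfl⟩ | ⟨rfl, rfl⟩⟩; exacts [h, h.symm]⟩

lemma edgeCount_addVertex [Finite V] : edgeCount (G.addVertex P) = edgeCount G + P.ncard := by
  have hdisj : Disjoint (Sym2.map some '' G.edgeSet) ((fun a => s(none, some a)) '' P) := by
    rw [Set.disjoint_left]
    rintro _ ⟨e, -, rfl⟩ ⟨a, -, h⟩
    have : none ∈ Sym2.map some e := h ▸ Sym2.mem_mk_left _ _
    simp at this
  rw [edgeCount, edgeSet_addVertex, Set.ncard_union_eq hdisj (Set.toFinite _) (Set.toFinite _),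
    Set.ncard_image_of_injective _ (Sym2.map.injective (Option.some_injective V)),
    Set.ncard_image_of_injective _ (fun a b h => by simpa using h), edgeCount]

lemma deg_addVertex_none : deg (G.addVertex P) none = P.ncard := by
  have : (G.addVertex P).neighborSet none = some '' P := by
    ext (_ | b) <;> simp
  rw [deg, this, Set.ncard_image_of_injective _ (Option.some_injective V)]

lemma deg_addVertex_some_of_mem [Finite V] {a : V} (ha : a ∈ P) :
    deg (G.addVertex P) (some a) = deg G a + 1 := by
  have : (G.addVertex P).neighborSet (some a) = insert none (some '' G.neighborSet a) := by
    ext (_ | b) <;> simp [ha]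
  rw [deg, this, Set.ncard_insert_of_notMem (by simp),
    Set.ncard_image_of_injective _ (Option.some_injective V), deg]

lemma deg_addVertex_some_of_notMem {a : V} (ha : a ∉ P) :
    deg (G.addVertex P) (some a) = deg G a := by
  have : (G.addVertex P).neighborSet (some a) = some '' G.neighborSet a := by
    ext (_ | b) <;> simp [ha]
  rw [deg, this, Set.ncard_image_of_injective _ (Option.some_injective V), deg]

end addVertex

def Subgraph.pullback {G : SimpleGraph V} {G' : SimpleGraph W} (M : G'.Subgraph) (f : V → W)
    (hf : ∀ ⦃a b⦄, G'.Adj (f a) (f b) → G.Adj a b) : G.Subgraph where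
  verts := {a | ∃ b, M.Adj (f a) (f b)}
  Adj a b := M.Adj (f a) (f b)
  adj_sub h := hf (M.adj_sub h)
  edge_vert h := ⟨_, h⟩
  symm := ⟨fun _ _ h => h.symm⟩

lemma Subgraph.IsMatching.pullback {G : SimpleGraph V} {G' : SimpleGraph W} {M : G'.Subgraph}
    (hM : M.IsMatching) {f : V → W} (hinj : Function.Injective f)
    (hf : ∀ ⦃a b⦄, G'.Adj (f a) (f b) → G.Adj a b) : (M.pullback f hf).IsMatching := by
  rintro a ⟨b, hb⟩
  exact ⟨b, hb, fun c hc => hinj (hM.eq_of_adj_left hc hb)⟩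

lemma matchNum_addVertex_le [Finite V] {G K : SimpleGraph V} {P : Set V} (hle : G ≤ K)
    (hP : ∀ a ∈ P, ∀ M : K.Subgraph, M.IsMatching → M.edgeSet.ncard = matchNum K → a ∈ M.verts) :
    matchNum (G.addVertex P) ≤ matchNum K := by
  refine matchNum_le_of_forall fun M hM => ?_
  set N : K.Subgraph := M.pullback some fun _ _ h => hle h
  have hN : N.IsMatching := hM.pullback (Option.some_injective V) _
  have hNcard : (Sym2.map some '' N.edgeSet).ncard = N.edgeSet.ncard :=
    Set.ncard_image_of_injective _ (Sym2.map.injective (Option.some_injective V))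
  by_cases hnone : none ∈ M.verts
  · obtain ⟨_ | a, ha, -⟩ := hM hnone
    · exact (M.adj_sub ha).elim
    -- `N` misses `a`, so it is not a maximum matching of `K`
    have hlt : N.edgeSet.ncard < matchNum K := by
      refine hN.ncard_edgeSet_le_matchNum.lt_of_ne fun h => ?_
      obtain ⟨b, hb⟩ := hP a (M.adj_sub ha) N hN h
      exact Option.some_ne_none b (hM.eq_of_adj_left hb ha.symm)
    have hsub : M.edgeSet ⊆ insert s(none, some a) (Sym2.map some '' N.edgeSet) := by
      intro e he
      induction e using Sym2.ind with
      | _ x y =>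
        rw [Subgraph.mem_edgeSet] at he
        rcases x with _ | b <;> rcases y with _ | c
        · exact (M.adj_sub he).elim
        · exact .inl (by rw [hM.eq_of_adj_left he ha])
        · exact .inl (by rw [hM.eq_of_adj_left he.symm ha, Sym2.eq_swap])
        · exact .inr ⟨s(b, c), he, rfl⟩
    calc M.edgeSet.ncard
        ≤ (insert s(none, some a) (Sym2.map some '' N.edgeSet)).ncard :=
          Set.ncard_le_ncard hsub (Set.toFinite _)
      _ ≤ N.edgeSet.ncard + 1 := hNcard ▸ Set.ncard_insert_le _ _
      _ ≤ matchNum K := hlt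
  · have hsub : M.edgeSet ⊆ Sym2.map some '' N.edgeSet := by
      intro e he
      induction e using Sym2.ind with
      | _ x y =>
        rw [Subgraph.mem_edgeSet] at he
        rcases x with _ | b <;> rcases y with _ | c
        · exact (hnone (M.edge_vert he)).elim
        · exact (hnone (M.edge_vert he)).elim
        · exact (hnone (M.edge_vert he.symm)).elim
        · exact ⟨s(b, c), he, rfl⟩
    calc M.edgeSet.ncard ≤ (Sym2.map some '' N.edgeSet).ncard :=
          Set.ncard_le_ncard hsub (Set.toFinite _)
      _ = N.edgeSet.ncard := hNcard
      _ ≤ matchNum K := hN.ncard_edgeSet_le_matchNum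

lemma deg_addVertex_deleteEdges_le [Finite V] {G : SimpleGraph V} {u v : V} (huv : G.Adj u v)
    (x : V) : deg ((G.deleteEdges {s(u, v)}).addVertex {u, v}) (some x) ≤ deg G x := by
  by_cases hx : x ∈ ({u, v} : Set V)
  · rw [deg_addVertex_some_of_mem hx]
    rcases hx with rfl | rfl
    · exact (deg_deleteEdges_add_one huv).le
    · rw [Sym2.eq_swap]
      exact (deg_deleteEdges_add_one huv.symm).le
  · rw [deg_addVertex_some_of_notMem hx]
    exact deg_mono (deleteEdges_le _) x

lemma edgeCount_add_ncard_le_of_eq_fMax [Fintype V] {H G : SimpleGraph V} {P : Set V} {ν Δ : ℕ}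
    (hν : matchNum H ≤ ν) (he : edgeCount H = fMax ν Δ) (hH : H.edgeSet.Nonempty) (hle : G ≤ H)
    (hP : ∀ a ∈ P, ∀ M : H.Subgraph, M.IsMatching → M.edgeSet.ncard = matchNum H → a ∈ M.verts)
    (hΔ : ∀ x, deg (G.addVertex P) x ≤ Δ) : edgeCount G + P.ncard ≤ edgeCount H := by
  have hpos : 0 < fMax ν Δ := he ▸ (Set.ncard_pos (Set.toFinite _)).mpr hH
  rw [← edgeCount_addVertex, he]
  exact edgeCount_le_fMax hpos ((matchNum_addVertex_le hle hP).trans hν) hΔ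

end SimpleGraph

theorem stmt14_general {V : Type*} [Fintype V] (k : ℕ) (hk : 4 ≤ k)
    (H : SimpleGraph V)
    (hm : matchNum H ≤ k - 1) (hd : ∀ v, deg H v ≤ k - 1)
    (he : edgeCount H = fMax (k - 1) (k - 1)) :
    let D : Set V := {v | ∃ M : H.Subgraph, M.IsMatching ∧
      M.edgeSet.ncard = matchNum H ∧ v ∉ M.verts}
    let A : Set V := {v | v ∉ D ∧ ∃ u ∈ D, H.Adj v u}
    (∀ u ∈ A, ∀ v ∈ A, ¬ H.Adj u v) ∧ (∀ v ∈ A, deg H v = k - 1) := by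
  intro D A
  have hA : ∀ a ∈ A, ∀ M : H.Subgraph, M.IsMatching → M.edgeSet.ncard = matchNum H →
      a ∈ M.verts :=
    fun a ha M hM hcard => by_contra fun h => ha.1 ⟨M, hM, hcard, h⟩
  refine ⟨fun u hu v hv huv => ?_, fun u hu => ?_⟩
  · have hsub := edgeCount_add_ncard_le_of_eq_fMax hm he ⟨s(u, v), huv⟩ (deleteEdges_le _)
      (P := {u, v}) (by rintro a (rfl | rfl); exacts [hA a hu, hA a hv]) (by
        rintro (_ | x)
        · rw [deg_addVertex_none, Set.ncard_pair huv.ne]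
          omega
        · exact (deg_addVertex_deleteEdges_le huv x).trans (hd x))
    have hdel := edgeCount_deleteEdges_add_one (show s(u, v) ∈ H.edgeSet from huv)
    rw [Set.ncard_pair huv.ne] at hsub
    omega
  · obtain ⟨d, -, hud⟩ := hu.2
    refine le_antisymm (hd u) (not_lt.1 fun hlt => ?_)
    have hpend := edgeCount_add_ncard_le_of_eq_fMax hm he ⟨s(u, d), hud⟩ le_rfl
      (P := {u}) (by rintro a rfl; exact hA a hu) (by
        rintro (_ | x)
        · rw [deg_addVertex_none, Set.ncard_singleton]
          omega
        · by_cases hx : x = u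
          · rw [hx, deg_addVertex_some_of_mem (Set.mem_singleton u)]
            omega
          · rw [deg_addVertex_some_of_notMem (Set.notMem_singleton_iff.mpr hx)]
            exact hd x)
    rw [Set.ncard_singleton] at hpend
    omega

/-- Claim 1: in an extremal graph for `f(k-1, k-1)` (`k ≥ 4` even), the Gallai–Edmonds
set `A` is independent and each of its vertices has degree exactly `k-1`. -/
theorem stmt14 {V : Type*} [Fintype V] (k : ℕ) (hk : 4 ≤ k) (hkeven : Even k)
    (H : SimpleGraph V)
    (hm : matchNum H ≤ k - 1) (hd : ∀ v, deg H v ≤ k - 1)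
    (he : edgeCount H = fMax (k - 1) (k - 1)) :
    let D : Set V := {v | ∃ M : H.Subgraph, M.IsMatching ∧
      M.edgeSet.ncard = matchNum H ∧ v ∉ M.verts}
    let A : Set V := {v | v ∉ D ∧ ∃ u ∈ D, H.Adj v u}
    (∀ u ∈ A, ∀ v ∈ A, ¬ H.Adj u v) ∧ (∀ v ∈ A, deg H v = k - 1) :=
  stmt14_general k hk H hm hd he
end

section
/- Let H be an edge-colored complete graph containing no rainbow K_{1,k+1}, and let G' be a rainbow subgraph of H with maximum degree at most k. If u and v are two vertices of degree exactly k in G' and uv ∉ E(G'), then adding the edge uv to G' creates a rainbow star K_{1,k+1} centered at u or at v; consequently, in any such maximal configuration the vertices of degree k in G' form a clique. -/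
open SimpleGraph

/-! Since `G'` is rainbow, the colour of `uv` lies on at most one edge of `G'`, and that edge cannot
contain both `u` and `v` (it would be `uv`). So at one endpoint, say `u`, the `k` edges of `G'` at `u`
together with `uv` carry distinct colours: a rainbow `K_{1,k+1}` centred at `u`. -/

lemma exists_eq_succ_of_mem_edgeSet_starGraph {m : ℕ} {e : Sym2 (Fin (m + 1))}
    (he : e ∈ (_root_.starGraph m).edgeSet) : ∃ i : Fin m, e = s(0, i.succ) := by
  induction e with
  | h a b =>
    obtain ⟨hab, hrel⟩ := he
    have hab' : a ≠ b := hab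
    have h0 : a = 0 ∨ b = 0 := by
      simp only [Fin.val_eq_zero_iff] at hrel
      tauto
    rcases h0 with rfl | rfl
    · obtain ⟨i, rfl⟩ := Fin.exists_succ_eq.mpr hab'.symm
      exact ⟨i, rfl⟩
    · obtain ⟨i, rfl⟩ := Fin.exists_succ_eq.mpr hab'
      exact ⟨i, Sym2.eq_swap⟩

lemma rainbowCopy_starGraph_of_injOn {n m : ℕ} (c : Sym2 (Fin n) → ℕ) {w : Fin n}
    {S : Finset (Fin n)} (hw : w ∉ S) (hS : S.card = m)
    (hc : Set.InjOn (fun x => c s(w, x)) S) :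
    RainbowCopy c (_root_.starGraph m) := by
  set leaf := S.orderEmbOfFin hS
  have hinj : Function.Injective (Fin.cons w leaf : Fin (m + 1) → Fin n) :=
    Fin.cons_injective_iff.mpr
      ⟨by rwa [Finset.range_orderEmbOfFin], leaf.injective⟩
  refine ⟨⟨Fin.cons w leaf, fun hab => hinj.ne hab.1⟩, hinj, ?_⟩
  intro e₁ he₁ e₂ he₂ hcol
  obtain ⟨i, rfl⟩ := exists_eq_succ_of_mem_edgeSet_starGraph he₁
  obtain ⟨j, rfl⟩ := exists_eq_succ_of_mem_edgeSet_starGraph he₂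
  have hleaf : leaf i = leaf j :=
    hc (S.orderEmbOfFin_mem hS i) (S.orderEmbOfFin_mem hS j) (by simpa using hcol)
  rw [leaf.injective hleaf]

lemma color_notMem_left_or_right {V α : Type*} {c : Sym2 V → α} {G : SimpleGraph V}
    (hrb : Set.InjOn c G.edgeSet) {u v : V} (huv : u ≠ v) (hnadj : ¬ G.Adj u v) :
    (∀ e ∈ G.edgeSet, u ∈ e → c e ≠ c s(u, v)) ∨
      (∀ e ∈ G.edgeSet, v ∈ e → c e ≠ c s(u, v)) := by
  by_contra! ⟨⟨e₁, he₁, hu, hc₁⟩, ⟨e₂, he₂, hv, hc₂⟩⟩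
  have he : e₁ = e₂ := hrb he₁ he₂ (hc₁.trans hc₂.symm)
  subst he
  rw [(Sym2.mem_and_mem_iff huv).mp ⟨hu, hv⟩] at he₁
  exact hnadj he₁

lemma rainbowCopy_starGraph_of_color_notMem {n k : ℕ} {c : Sym2 (Fin n) → ℕ}
    {G : SimpleGraph (Fin n)} (hrb : Set.InjOn c G.edgeSet) {w z : Fin n}
    (hw : deg G w = k) (hwz : w ≠ z) (hnadj : ¬ G.Adj w z)
    (hc : ∀ e ∈ G.edgeSet, w ∈ e → c e ≠ c s(w, z)) :
    RainbowCopy c (_root_.starGraph (k + 1)) := by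
  classical
  have hcard : (G.neighborFinset w).card = k := by
    rw [← hw, deg, ← Set.ncard_coe_finset, coe_neighborFinset]
  have hz : z ∉ G.neighborFinset w := by simpa using hnadj
  refine rainbowCopy_starGraph_of_injOn c (w := w) (S := insert z (G.neighborFinset w)) ?_
    (by rw [Finset.card_insert_of_notMem hz, hcard]) ?_
  · simpa [mem_neighborFinset] using hwz
  · intro x hx y hy hxy
    simp only [Finset.coe_insert, Set.mem_insert_iff, Finset.mem_coe,
      mem_neighborFinset] at hx hy
    rcases hx with rfl | hx <;> rcases hy with rfl | hy
    · rfl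
    · exact absurd hxy.symm (hc _ hy (Sym2.mem_mk_left _ _))
    · exact absurd hxy (hc _ hx (Sym2.mem_mk_left _ _))
    · exact Sym2.congr_right.mp (hrb hx hy hxy)

theorem stmt17_general (n k : ℕ) (c : Sym2 (Fin n) → ℕ) (G' : SimpleGraph (Fin n))
    (hrb : Set.InjOn c G'.edgeSet)
    (u v : Fin n) (hu : deg G' u = k) (hv : deg G' v = k) (huv : u ≠ v) :
    (¬ G'.Adj u v →
      ((∀ e ∈ G'.edgeSet, u ∈ e → c e ≠ c s(u, v)) ∨
       (∀ e ∈ G'.edgeSet, v ∈ e → c e ≠ c s(u, v)))) ∧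
    (¬ RainbowCopy c (_root_.starGraph (k + 1)) → G'.Adj u v) := by
  refine ⟨color_notMem_left_or_right hrb huv, fun hno => ?_⟩
  by_contra hnadj
  rcases color_notMem_left_or_right hrb huv hnadj with hcu | hcv
  · exact hno (rainbowCopy_starGraph_of_color_notMem hrb hu huv hnadj hcu)
  · refine hno (rainbowCopy_starGraph_of_color_notMem hrb hv huv.symm (hnadj ∘ G'.adj_symm) ?_)
    simpa only [Sym2.eq_swap] using hcv

/-- Claim 8: if `G'` is a rainbow subgraph of the colored `K_n` with `Δ(G') ≤ k` and
`u, v` are nonadjacent vertices of degree `k`, then adding `uv` creates a rainbow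
`K_{1,k+1}` centered at `u` or at `v`; consequently, if the coloring has no rainbow
`K_{1,k+1}`, the degree-`k` vertices of `G'` form a clique. -/
theorem stmt17 (n k : ℕ) (c : Sym2 (Fin n) → ℕ) (G' : SimpleGraph (Fin n))
    (hrb : Set.InjOn c G'.edgeSet) (hdeg : ∀ x, deg G' x ≤ k)
    (u v : Fin n) (hu : deg G' u = k) (hv : deg G' v = k) (huv : u ≠ v) :
    (¬ G'.Adj u v →
      ((∀ e ∈ G'.edgeSet, u ∈ e → c e ≠ c s(u, v)) ∨
       (∀ e ∈ G'.edgeSet, v ∈ e → c e ≠ c s(u, v)))) ∧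
    (¬ RainbowCopy c (_root_.starGraph (k + 1)) → G'.Adj u v) :=
  stmt17_general n k c G' hrb u v hu hv huv
end
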